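/- arXiv:1710.02505 — 10 statements merged into one kernel-verified Lean document; each statement's English description precedes it below -/
import Mathlib

section
/- Let q be a power of an odd prime p and let F be a finite field with q elements. Then in the polynomial ring F[x,y] one has the identity x^{2q-1} + y^{2q-1} + (-x-y)^{2q-1} = x·y·(x+y)·∏_{α ∈ F, α ≠ 0, α ≠ -1} (x - α·y)^2. -/
open scoped Classical

open MvPolynomial

open scoped Polynomial

/-!
Homogenizing `∏_{a ∈ F} (T - a) = T^q - T` gives `∏_a (x - a y) = x^q - x y^(q-1)`, and
splitting off the factors `a = 0` and `a = -1` leaves `(x + y) P = x^(q-1) - y^(q-1)`, where `P`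
is the product in the statement before squaring. After multiplying by `(x + y)^2`, Frobenius
`(x + y)^q = x^q + y^q` turns the left side into
`(x + y) ((x + y)(x^(2q-1) + y^(2q-1)) - (x^q + y^q)^2) = x y (x + y) (x^(q-1) - y^(q-1))^2`.
-/

namespace FiniteField

variable (K : Type*) [Field K] [Fintype K]

theorem prod_univ_X_sub_C :
    ∏ a : K, (Polynomial.X - Polynomial.C a) = Polynomial.X ^ Fintype.card K - Polynomial.X := by
  have hmonic : (Polynomial.X ^ Fintype.card K - Polynomial.X : K[X]).Monic :=
    Polynomial.monic_X_pow_sub (by simpa using Fintype.one_lt_card (α := K))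
  have h := Polynomial.prod_multiset_X_sub_C_of_monic_of_roots_card_eq hmonic (by
    rw [roots_X_pow_card_sub_X, X_pow_card_sub_X_natDegree_eq K Fintype.one_lt_card]; rfl)
  rwa [roots_X_pow_card_sub_X] at h

theorem prod_univ_X_zero_sub_C_mul_X_one :
    ∏ a : K, (X 0 - C a * X 1 : MvPolynomial (Fin 2) K)
      = X 0 ^ Fintype.card K - X 0 * X 1 ^ (Fintype.card K - 1) := by
  calc ∏ a : K, (X 0 - C a * X 1 : MvPolynomial (Fin 2) K)
      = ∏ a : K, (Polynomial.X - Polynomial.C a).homogenize 1 := by simp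
    _ = (∏ a : K, (Polynomial.X - Polynomial.C a)).homogenize (∑ _a : K, 1) :=
        (Polynomial.homogenize_finsetProd fun (a : K) _ => (Polynomial.natDegree_X_sub_C a).le).symm
    _ = (Polynomial.X ^ Fintype.card K - Polynomial.X : K[X]).homogenize (Fintype.card K) := by
        rw [prod_univ_X_sub_C]; simp
    _ = X 0 ^ Fintype.card K - X 0 * X 1 ^ (Fintype.card K - 1) := by
        simp [Fintype.card_ne_zero]

theorem X_zero_add_X_one_mul_prod_X_zero_sub_C_mul_X_one :
    (X 0 + X 1) * ∏ a ∈ Finset.univ.filter (fun a : K => a ≠ 0 ∧ a ≠ -1),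
        (X 0 - C a * X 1 : MvPolynomial (Fin 2) K)
      = X 0 ^ (Fintype.card K - 1) - X 1 ^ (Fintype.card K - 1) := by
  set P := ∏ a ∈ Finset.univ.filter (fun a : K => a ≠ 0 ∧ a ≠ -1),
    (X 0 - C a * X 1 : MvPolynomial (Fin 2) K)
  have hfilter :
      Finset.univ.filter (fun a : K => a ≠ 0 ∧ a ≠ -1) = Finset.univ \ {0, -1} := by
    ext a; simp
  have hsplit :
      ∏ a : K, (X 0 - C a * X 1 : MvPolynomial (Fin 2) K) = X 0 * ((X 0 + X 1) * P) := by
    rw [← Finset.prod_sdiff (Finset.subset_univ {0, -1}), ← hfilter,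
      Finset.prod_pair (neg_ne_zero.mpr one_ne_zero).symm]
    simp only [map_zero, zero_mul, sub_zero, map_neg, map_one, neg_mul, one_mul, sub_neg_eq_add]
    ring
  apply mul_left_cancel₀ (X_ne_zero (R := K) (0 : Fin 2))
  rw [← hsplit, prod_univ_X_zero_sub_C_mul_X_one, mul_sub, ← pow_succ',
    Nat.sub_add_cancel Fintype.card_pos]

theorem add_pow_card {R : Type*} [CommRing R] [CharP R (ringChar K)] (x y : R) :
    (x + y) ^ Fintype.card K = x ^ Fintype.card K + y ^ Fintype.card K := by
  obtain ⟨n, hprime, hcard⟩ := FiniteField.card K (ringChar K)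
  have := Fact.mk hprime
  rw [hcard, add_pow_char_pow]

end FiniteField

theorem add_sq_mul_sub_add_pow_of_add_pow_eq {R : Type*} [CommRing R] {x y : R} {m : ℕ}
    (h : (x + y) ^ (m + 1) = x ^ (m + 1) + y ^ (m + 1)) :
    (x + y) ^ 2 * (x ^ (2 * m + 1) + y ^ (2 * m + 1) - (x + y) ^ (2 * m + 1))
      = x * y * (x + y) * (x ^ m - y ^ m) ^ 2 := by
  have hsplit : (x + y) ^ 2 * (x + y) ^ (2 * m + 1) = ((x + y) ^ (m + 1)) ^ 2 * (x + y) := by ring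
  rw [mul_sub, hsplit, h]
  ring

theorem polynomial_identity_two_vars_general
    (p f : ℕ)
    (F : Type) [Field F] [Fintype F] (hF : Fintype.card F = p ^ f) :
    (X 0 : MvPolynomial (Fin 2) F) ^ (2 * p ^ f - 1)
      + (X 1) ^ (2 * p ^ f - 1)
      + (-(X 0) - X 1) ^ (2 * p ^ f - 1)
    = X 0 * X 1 * (X 0 + X 1) *
        ∏ α ∈ Finset.univ.filter (fun α : F => α ≠ 0 ∧ α ≠ -1),
          (X 0 - C α * X 1) ^ 2 := by
  obtain ⟨m, hm⟩ := Nat.exists_eq_add_one_of_ne_zero (Fintype.card_ne_zero (α := F))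
  have hexp : 2 * p ^ f - 1 = 2 * m + 1 := by omega
  have hfrob := FiniteField.add_pow_card F (X 0 : MvPolynomial (Fin 2) F) (X 1)
  have hfactor := FiniteField.X_zero_add_X_one_mul_prod_X_zero_sub_C_mul_X_one F
  rw [hm] at hfrob
  rw [hm, Nat.add_sub_cancel] at hfactor
  have hxy : (X 0 + X 1 : MvPolynomial (Fin 2) F) ≠ 0 := fun h => by
    simpa using congrArg (eval ![1, 0]) h
  rw [hexp, ← neg_add', Odd.neg_pow (odd_two_mul_add_one m), ← sub_eq_add_neg, Finset.prod_pow]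
  apply mul_left_cancel₀ (pow_ne_zero 2 hxy)
  rw [add_sq_mul_sub_add_pow_of_add_pow_eq hfrob, ← hfactor]
  ring

/-- For `F` a finite field with `q = p^f` elements (`p` an odd prime),
in `F[x,y]` one has
`x^(2q-1) + y^(2q-1) + (-x-y)^(2q-1) = x·y·(x+y)·∏_{α ∈ F, α ≠ 0, -1} (x - α·y)^2`. -/
theorem polynomial_identity_two_vars
    (p f : ℕ) (hp : p.Prime) (hodd : Odd p) (hf : 0 < f)
    (F : Type) [Field F] [Fintype F] (hF : Fintype.card F = p ^ f) :
    (X 0 : MvPolynomial (Fin 2) F) ^ (2 * p ^ f - 1)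
      + (X 1) ^ (2 * p ^ f - 1)
      + (-(X 0) - X 1) ^ (2 * p ^ f - 1)
    = X 0 * X 1 * (X 0 + X 1) *
        ∏ α ∈ Finset.univ.filter (fun α : F => α ≠ 0 ∧ α ≠ -1),
          (X 0 - C α * X 1) ^ 2 :=
  polynomial_identity_two_vars_general p f F hF
end

section
/- Let q be a power of an odd prime p, let F be a finite field with q elements, and set P(X) = X^{2q-1} + 1 - (X+1)^{2q-1} ∈ F[X]. Then for every α ∈ F with α ≠ 0 and α ≠ -1, the polynomial (X - α)^2 divides P(X) in F[X]. -/
open Polynomial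

/-! Every nonzero `x ∈ F` satisfies `x ^ (q - 1) = 1`, so for `n = 2q - 1` both `α` and `α + 1`
satisfy `x ^ (n - 1) = 1`. For such `a`, the polynomial `X ^ n + 1 - (X + 1) ^ n` and its
derivative `n (X ^ (n - 1) - (X + 1) ^ (n - 1))` both vanish at `a`, so `a` is a double root. -/

namespace Polynomial

variable {R : Type*} [CommRing R]

theorem X_sub_C_sq_dvd_of_isRoot_of_isRoot_derivative {p : R[X]} {t : R} (h0 : p.IsRoot t)
    (h1 : (derivative p).IsRoot t) : (X - C t) ^ 2 ∣ p := by
  rcases eq_or_ne p 0 with rfl | hp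
  · exact dvd_zero _
  exact (le_rootMultiplicity_iff hp).1 ((one_lt_rootMultiplicity_iff_isRoot hp).2 ⟨h0, h1⟩)

theorem X_sub_C_sq_dvd_X_pow_add_one_sub_X_add_one_pow {n : ℕ} (hn : 1 ≤ n) {a : R}
    (ha : a ^ (n - 1) = 1) (ha1 : (a + 1) ^ (n - 1) = 1) :
    (X - C a) ^ 2 ∣ (X : R[X]) ^ n + 1 - (X + 1) ^ n := by
  apply X_sub_C_sq_dvd_of_isRoot_of_isRoot_derivative
  · have hpow : ∀ x : R, x ^ (n - 1) = 1 → x ^ n = x := fun x hx => by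
      rw [← Nat.sub_add_cancel hn, pow_succ, hx, one_mul]
    simp only [IsRoot, eval_sub, eval_add, eval_pow, eval_X, eval_one, hpow a ha,
      hpow (a + 1) ha1]
    ring
  · simp only [IsRoot, derivative_sub, derivative_add, derivative_one, derivative_pow,
      derivative_X, eval_sub, eval_add, eval_mul, eval_pow, eval_C, eval_X,
      eval_one, eval_zero, ha, ha1]
    ring

end Polynomial

theorem FiniteField.pow_card_sub_one_mul_eq_one {K : Type*} [GroupWithZero K] [Fintype K]
    {x : K} (hx : x ≠ 0) (k : ℕ) : x ^ ((Fintype.card K - 1) * k) = 1 := by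
  rw [pow_mul, pow_card_sub_one_eq_one x hx, one_pow]

theorem sq_dvd_P_general
    (p f : ℕ)
    (F : Type) [Field F] [Fintype F] (hF : Fintype.card F = p ^ f)
    (α : F) (hα0 : α ≠ 0) (hα1 : α ≠ -1) :
    (X - C α) ^ 2 ∣
      ((X : F[X]) ^ (2 * p ^ f - 1) + 1 - (X + 1) ^ (2 * p ^ f - 1)) := by
  have hcard : 0 < Fintype.card F := Fintype.card_pos
  have hexp : 2 * p ^ f - 1 - 1 = (Fintype.card F - 1) * 2 := by omega
  have unit_pow : ∀ x : F, x ≠ 0 → x ^ (2 * p ^ f - 1 - 1) = 1 := fun x hx => by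
    rw [hexp]
    exact FiniteField.pow_card_sub_one_mul_eq_one hx 2
  have hα1' : α + 1 ≠ 0 := fun h => hα1 (eq_neg_of_add_eq_zero_left h)
  exact X_sub_C_sq_dvd_X_pow_add_one_sub_X_add_one_pow (by omega) (unit_pow α hα0)
    (unit_pow (α + 1) hα1')

/-- For `F` a finite field with `q = p^f` elements (`p` an odd prime) and
`P(X) = X^(2q-1) + 1 - (X+1)^(2q-1) ∈ F[X]`, for every `α ∈ F` with `α ≠ 0`, `α ≠ -1`,
the polynomial `(X - α)^2` divides `P(X)`. -/
theorem sq_dvd_P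
    (p f : ℕ) (hp : p.Prime) (hodd : Odd p) (hf : 0 < f)
    (F : Type) [Field F] [Fintype F] (hF : Fintype.card F = p ^ f)
    (α : F) (hα0 : α ≠ 0) (hα1 : α ≠ -1) :
    (X - C α) ^ 2 ∣
      ((X : F[X]) ^ (2 * p ^ f - 1) + 1 - (X + 1) ^ (2 * p ^ f - 1)) :=
  sq_dvd_P_general p f F hF α hα0 hα1
end

section
/- Let q be a power of an odd prime p and let F be a finite field with q elements. Then the polynomial x^{2q-1} + y^{2q-1} + (-x-y)^{2q-1} ∈ F[x,y] is not a d-th power for any integer d ≥ 2; that is, there is no g ∈ F[x,y] and no d ≥ 2 with x^{2q-1} + y^{2q-1} + (-x-y)^{2q-1} = g^d. -/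
open MvPolynomial

/-!
Put `x = X` and `y = 1`. The result `P = X ^ n + 1 + (-X - 1) ^ n`, with `n = 2q - 1` odd, has
`P(0) = 0` and `P'(0) = -n = 1`, as `q = 0` in the field: it has a simple root at `0`,
which a `d`-th power with `d ≥ 2` cannot have.
-/

namespace Polynomial

variable {R : Type*} [CommRing R]

theorem coeff_one_pow_eq_zero_of_coeff_zero_pow_eq_zero [IsDomain R] {g : R[X]} {d : ℕ}
    (hd : 2 ≤ d) (h0 : (g ^ d).coeff 0 = 0) : (g ^ d).coeff 1 = 0 := by
  have hXg : X ∣ g := prime_X.dvd_of_dvd_pow (X_dvd_iff.mpr h0)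
  have hX2 : X ^ 2 ∣ g ^ d := (pow_dvd_pow _ hd).trans (pow_dvd_pow_of_dvd hXg d)
  exact (X_pow_dvd_iff.mp hX2) 1 one_lt_two

variable {n : ℕ}

theorem coeff_zero_X_pow_add_one_add_neg_X_sub_one_pow (hn : Odd n) :
    (X ^ n + 1 + (-X - 1) ^ n : R[X]).coeff 0 = 0 := by
  rw [show (-X - 1 : R[X]) = -(X + 1) by ring, hn.neg_pow]
  simp [coeff_X_pow, coeff_X_add_one_pow, hn.pos.ne]

theorem coeff_one_X_pow_add_one_add_neg_X_sub_one_pow (hn : Odd n) (h1 : n ≠ 1) :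
    (X ^ n + 1 + (-X - 1) ^ n : R[X]).coeff 1 = -n := by
  rw [show (-X - 1 : R[X]) = -(X + 1) by ring, hn.neg_pow]
  simp [coeff_X_pow, coeff_one, coeff_X_add_one_pow, Ne.symm h1]

end Polynomial

theorem not_a_power_general
    (p f : ℕ)
    (F : Type) [Field F] [Fintype F] (hF : Fintype.card F = p ^ f) :
    ¬ ∃ (g : MvPolynomial (Fin 2) F) (d : ℕ), 2 ≤ d ∧
      (X 0 : MvPolynomial (Fin 2) F) ^ (2 * p ^ f - 1)
        + (X 1) ^ (2 * p ^ f - 1)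
        + (-(X 0) - X 1) ^ (2 * p ^ f - 1) = g ^ d := by
  rintro ⟨g, d, hd, hg⟩
  set n := 2 * p ^ f - 1
  have hq : 1 < p ^ f := hF ▸ Fintype.one_lt_card
  have hn : Odd n := Nat.Even.sub_odd (by omega) (even_two_mul _) odd_one
  have hnF : (n : F) = -1 := by
    have hqF : ((p ^ f : ℕ) : F) = 0 := hF ▸ FiniteField.cast_card_eq_zero F
    rw [Nat.cast_sub (by omega), Nat.cast_mul, hqF]
    ring
  obtain ⟨G, hP⟩ : ∃ G : Polynomial F, Polynomial.X ^ n + 1 + (-Polynomial.X - 1) ^ n = G ^ d :=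
    ⟨_, by simpa using congrArg (aeval ![Polynomial.X, (1 : Polynomial F)]) hg⟩
  have h0 : (G ^ d).coeff 0 = 0 :=
    hP ▸ Polynomial.coeff_zero_X_pow_add_one_add_neg_X_sub_one_pow hn
  have h1 := Polynomial.coeff_one_X_pow_add_one_add_neg_X_sub_one_pow (R := F) hn (by omega)
  rw [hP, Polynomial.coeff_one_pow_eq_zero_of_coeff_zero_pow_eq_zero hd h0, hnF] at h1
  simp at h1

/-- For `F` a finite field with `q = p^f` elements (`p` an odd prime),
the polynomial `x^(2q-1) + y^(2q-1) + (-x-y)^(2q-1) ∈ F[x,y]` is not a `d`-th power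
for any `d ≥ 2`. -/
theorem not_a_power
    (p f : ℕ) (hp : p.Prime) (hodd : Odd p) (hf : 0 < f)
    (F : Type) [Field F] [Fintype F] (hF : Fintype.card F = p ^ f) :
    ¬ ∃ (g : MvPolynomial (Fin 2) F) (d : ℕ), 2 ≤ d ∧
      (X 0 : MvPolynomial (Fin 2) F) ^ (2 * p ^ f - 1)
        + (X 1) ^ (2 * p ^ f - 1)
        + (-(X 0) - X 1) ^ (2 * p ^ f - 1) = g ^ d :=
  not_a_power_general p f F hF
end

section
/- Let q be a power of an odd prime p, let F be a finite field with q elements, and let E be a field extension of F of degree 2 (so E has q² elements). Then the span of the set of roots of unity μ_{2(q-1)}(E) = {x ∈ E : x^{2(q-1)} = 1} over the prime field 𝔽_p is all of E. -/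
/-!
The unit group of `E` is cyclic of order `q² - 1 = (q - 1)(q + 1)`, which is divisible by
`2(q - 1)` because `q` is odd. An element `y` of order exactly `2(q - 1)` has `y ^ (q - 1) ≠ 1`,
so it is not in `F`, and `1, y` is an `F`-basis of `E`. The roots of unity of order dividing
`2(q - 1)` contain `1` and `y` and are stable under multiplication by `Fˣ`, so every `a • y + b • 1`
is a sum of at most two of them.
-/

open Module

theorem Submodule.span_subset_span_of_smul_mem {R K M : Type*} [Semiring R] [Semiring K]
    [AddCommMonoid M] [Module R M] [Module K M] {s : Set M}
    (hs : ∀ a : K, a ≠ 0 → ∀ x ∈ s, a • x ∈ s) :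
    (span K s : Set M) ⊆ span R s := by
  rintro m hm
  obtain ⟨n, c, x, rfl⟩ := mem_span_set'.1 hm
  refine sum_mem fun i _ ↦ ?_
  rcases eq_or_ne (c i) 0 with hc | hc
  · simp [hc]
  · exact subset_span (hs _ hc _ (x i).2)

theorem IsCyclic.exists_orderOf_eq_of_dvd {G : Type*} [Group G] [IsCyclic G] [Finite G] {d : ℕ}
    (hd : d ∣ Nat.card G) : ∃ g : G, orderOf g = d := by
  obtain ⟨g, hg⟩ := IsCyclic.exists_ofOrder_eq_natCard (α := G)
  exact ⟨g ^ (orderOf g / d), orderOf_pow_orderOf_div (hg ▸ Nat.card_pos.ne') (hg ▸ hd)⟩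

theorem Nat.two_mul_sub_one_dvd_sq_sub_one {q : ℕ} (hq : Odd q) : 2 * (q - 1) ∣ q ^ 2 - 1 := by
  obtain ⟨k, rfl⟩ := hq
  exact ⟨k + 1, by rw [Nat.add_sub_cancel, Nat.sub_eq_of_eq_add]; ring⟩

theorem span_pair_one_eq_top_of_finrank_eq_two {F E : Type*} [Field F] [Ring E] [Algebra F E]
    (hrank : finrank F E = 2) {y : E} (hy : y ∉ Set.range (algebraMap F E)) :
    Submodule.span F {y, 1} = ⊤ := by
  have : Nontrivial E := Module.nontrivial_of_finrank_eq_succ hrank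
  have hli : LinearIndependent F ![y, 1] := by
    refine linearIndependent_fin2.2 ⟨one_ne_zero, fun a ha ↦ hy ⟨a, ?_⟩⟩
    simpa [Algebra.algebraMap_eq_smul_one] using ha
  rw [← Matrix.range_cons_cons_empty y 1 ![]]
  exact hli.span_eq_top_of_card_eq_finrank (by simp [hrank])

section FiniteField

variable {F E : Type*} [Field F] [Fintype F] [Field E] [Algebra F E]

theorem exists_pow_two_mul_card_sub_one_eq_one_notMem_range (hodd : Odd (Fintype.card F))
    (hrank : finrank F E = 2) :
    ∃ y : E, y ^ (2 * (Fintype.card F - 1)) = 1 ∧ y ∉ Set.range (algebraMap F E) := by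
  set q := Fintype.card F
  have : FiniteDimensional F E := .of_finrank_pos (by omega)
  have : Finite E := Module.finite_of_finite F
  have hcard : Nat.card Eˣ = q ^ 2 - 1 := by
    rw [Nat.card_units, natCard_eq_pow_finrank (K := F), hrank, Nat.card_eq_fintype_card]
  obtain ⟨u, hu⟩ :=
    IsCyclic.exists_orderOf_eq_of_dvd (hcard ▸ Nat.two_mul_sub_one_dvd_sq_sub_one hodd)
  have hq : 1 < q := Fintype.one_lt_card
  refine ⟨u, by rw [← Units.val_pow_eq_pow_val, ← hu, pow_orderOf_eq_one, Units.val_one], ?_⟩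
  rintro ⟨a, ha⟩
  have ha0 : a ≠ 0 := by rintro rfl; exact u.ne_zero (by simpa using ha.symm)
  refine pow_ne_one_of_lt_orderOf (x := u) (n := q - 1) (by omega) (by omega) (Units.ext ?_)
  rw [Units.val_pow_eq_pow_val, ← ha, ← map_pow, FiniteField.pow_card_sub_one_eq_one a ha0,
    map_one, Units.val_one]

theorem smul_pow_eq_pow_of_card_sub_one_dvd {a : F} (ha : a ≠ 0) (x : E) {n : ℕ}
    (hn : Fintype.card F - 1 ∣ n) : (a • x) ^ n = x ^ n := by
  obtain ⟨k, rfl⟩ := hn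
  rw [smul_pow, pow_mul, FiniteField.pow_card_sub_one_eq_one a ha, one_pow, one_smul]

end FiniteField

theorem span_roots_of_unity_general
    (p f : ℕ) (hodd : Odd p)
    (F : Type) [Field F] [Fintype F] (hF : Fintype.card F = p ^ f)
    (E : Type) [Field E] [Algebra F E] (hrank : Module.finrank F E = 2)
    [CharP E p] :
    letI : Algebra (ZMod p) E := ZMod.algebra E p
    Submodule.span (ZMod p) {x : E | x ^ (2 * (p ^ f - 1)) = 1} = ⊤ := by
  let _ : Algebra (ZMod p) E := ZMod.algebra E p
  rw [← hF]
  set S := {x : E | x ^ (2 * (Fintype.card F - 1)) = 1}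
  obtain ⟨y, hy, hyF⟩ := exists_pow_two_mul_card_sub_one_eq_one_notMem_range (hF ▸ hodd.pow) hrank
  have hspan : Submodule.span F S = ⊤ := by
    refine top_le_iff.1 (span_pair_one_eq_top_of_finrank_eq_two hrank hyF ▸ Submodule.span_mono ?_)
    simp [S, Set.insert_subset_iff, hy]
  have hsmul : ∀ a : F, a ≠ 0 → ∀ x ∈ S, a • x ∈ S := fun a ha x hx ↦ by
    rwa [Set.mem_ofPred, smul_pow_eq_pow_of_card_sub_one_dvd ha x (dvd_mul_left _ _)]
  exact eq_top_iff.2 fun z _ ↦ Submodule.span_subset_span_of_smul_mem hsmul (hspan ▸ trivial)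

/-- If `F` is a finite field with `q = p^f` elements (`p` an odd prime) and
`E/F` a field extension of degree 2 (so `E` has `q²` elements), then the `𝔽_p`-span of
`μ_{2(q-1)}(E) = {x ∈ E : x^{2(q-1)} = 1}` is all of `E`. -/
theorem span_roots_of_unity
    (p f : ℕ) (hp : p.Prime) (hodd : Odd p) (hf : 0 < f)
    (F : Type) [Field F] [Fintype F] (hF : Fintype.card F = p ^ f)
    (E : Type) [Field E] [Algebra F E] (hrank : Module.finrank F E = 2)
    [CharP E p] :
    letI : Algebra (ZMod p) E := ZMod.algebra E p
    Submodule.span (ZMod p) {x : E | x ^ (2 * (p ^ f - 1)) = 1} = ⊤ :=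
  span_roots_of_unity_general p f hodd F hF E hrank
end

section
/- Let p be an odd prime and q = p^f a power of p with q > 1. Let Q be a finite commutative group of order q and exponent p (an elementary abelian p-group), and let V be a finite-dimensional complex representation of Q whose character χ satisfies χ(1) = 2q-1 and χ(g) = q-1 for every g ≠ 1 (equivalently, the trivial character of Q occurs in V with multiplicity q and every nontrivial character of Q occurs with multiplicity exactly 1). Then V is tensor indecomposable: V is not isomorphic, as a representation of Q, to a tensor product X₁ ⊗ X₂ of two representations X₁, X₂ of Q each of dimension ≥ 2. -/
open CategoryTheory MonoidalCategory

/-!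
Write `n_X(ψ)` for the multiplicity of the character `ψ` of `Q` in a representation `X`.
Fourier inversion over the finite abelian group `Q` turns the character hypotheses into
`n_V(0) = q` and `n_V(μ) = 1` for `μ ≠ 0`, and turns `V ≅ X₁ ⊗ X₂` into the convolution identity
`n_V = n_{X₁} * n_{X₂}` on the dual group. Put `a = dim X₁`, `b = dim X₂`; summing gives
`a b = 2q - 1`. If some `n_{X₁}(φ) ≥ 2`, every `μ ≠ 0` receives weight at most 1, which pins both
multiplicity functions to single points, so `n_V(0) = a b`; if all multiplicities are at most 1,
then `q = n_V(0) ≤ a, b`. Both contradict `a b = 2q - 1` once `a, b ≥ 2`.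
-/

open Finset

section AddConv

variable {D : Type*} [AddCommGroup D] [Fintype D]

def addConv (m n : D → ℕ) (μ : D) : ℕ := ∑ ψ, m (μ - ψ) * n ψ

lemma addConv_comm (m n : D → ℕ) : addConv m n = addConv n m := by
  ext μ
  exact Fintype.sum_equiv (Equiv.subLeft μ) _ _ fun ψ => by simp [mul_comm]

lemma sum_addConv (m n : D → ℕ) : ∑ μ, addConv m n μ = (∑ φ, m φ) * ∑ ψ, n ψ := by
  simp only [addConv]
  rw [Finset.sum_comm, Finset.mul_sum]
  refine Finset.sum_congr rfl fun ψ _ => ?_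
  rw [← Finset.sum_mul, Fintype.sum_equiv (Equiv.subRight ψ) (fun μ => m (μ - ψ)) m fun _ => rfl]

lemma mul_le_addConv (m n : D → ℕ) (φ ψ : D) : m φ * n ψ ≤ addConv m n (φ + ψ) := by
  simpa [addConv] using Finset.single_le_sum (fun ψ _ => Nat.zero_le _) (mem_univ ψ)
    (f := fun ψ' => m (φ + ψ - ψ') * n ψ')

lemma addConv_le_sum_left {m n : D → ℕ} (hn : ∀ ψ, n ψ ≤ 1) (μ : D) :
    addConv m n μ ≤ ∑ φ, m φ := calc
  addConv m n μ ≤ ∑ ψ, m (μ - ψ) :=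
    sum_le_sum fun ψ _ => mul_le_of_le_one_right (Nat.zero_le _) (hn ψ)
  _ = ∑ φ, m φ := Fintype.sum_equiv (Equiv.subLeft μ) _ _ fun _ => rfl

variable {m n : D → ℕ}

lemma eq_zero_of_two_le_of_addConv_le_one (h : ∀ μ ≠ 0, addConv m n μ ≤ 1) {φ : D}
    (hφ : 2 ≤ m φ) {ψ : D} (hψ : ψ ≠ -φ) : n ψ = 0 := by
  have hne : φ + ψ ≠ 0 := fun h => hψ (eq_neg_of_add_eq_zero_right h)
  have := (mul_le_addConv m n φ ψ).trans (h _ hne)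
  by_contra hn
  nlinarith [Nat.one_le_iff_ne_zero.mpr hn]

lemma addConv_zero_eq_mul_of_two_le (h : ∀ μ ≠ 0, addConv m n μ ≤ 1) {φ : D}
    (hφ : 2 ≤ m φ) (hn : 2 ≤ ∑ ψ, n ψ) : addConv m n 0 = (∑ φ, m φ) * ∑ ψ, n ψ := by
  have hn_supp {ψ : D} : ψ ≠ -φ → n ψ = 0 := eq_zero_of_two_le_of_addConv_le_one h hφ
  have hn_sum : ∑ ψ, n ψ = n (-φ) := Fintype.sum_eq_single _ fun ψ hψ => hn_supp hψ
  have hm_supp {φ' : D} : φ' ≠ - -φ → m φ' = 0 :=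
    eq_zero_of_two_le_of_addConv_le_one (addConv_comm m n ▸ h) (hn_sum ▸ hn)
  have hm_sum : ∑ φ', m φ' = m φ :=
    Fintype.sum_eq_single _ fun φ' hφ' => hm_supp (by rwa [neg_neg])
  rw [hm_sum, hn_sum, addConv,
    Fintype.sum_eq_single (-φ) fun ψ hψ => by rw [hn_supp hψ, mul_zero], zero_sub, neg_neg]

lemma addConv_ne_ite [DecidableEq D] (hm : 2 ≤ ∑ φ, m φ) (hn : 2 ≤ ∑ ψ, n ψ) :
    addConv m n ≠ fun μ => if μ = 0 then Fintype.card D else 1 := by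
  intro h
  replace h := congrFun h
  set q := Fintype.card D
  have hq : 1 ≤ q := Fintype.card_pos
  have h_le_one : ∀ μ ≠ 0, addConv m n μ ≤ 1 := fun μ hμ => by simp [h, hμ]
  have h_zero : addConv m n 0 = q := by simp [h]
  have h_total : (∑ φ, m φ) * ∑ ψ, n ψ + 1 = 2 * q := by
    rw [← sum_addConv, Fintype.sum_congr _ _ h, Fintype.sum_eq_add_sum_compl 0, if_pos rfl,
      sum_congr rfl fun μ hμ => if_neg (by simpa using hμ), sum_const, card_compl, card_singleton]
    simp only [smul_eq_mul, mul_one]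
    omega
  have hmn : 4 ≤ (∑ φ, m φ) * ∑ ψ, n ψ := Nat.mul_le_mul hm hn
  by_cases hm₂ : ∃ φ, 2 ≤ m φ
  · obtain ⟨φ, hφ⟩ := hm₂
    have := addConv_zero_eq_mul_of_two_le h_le_one hφ hn
    omega
  by_cases hn₂ : ∃ ψ, 2 ≤ n ψ
  · obtain ⟨ψ, hψ⟩ := hn₂
    have := addConv_zero_eq_mul_of_two_le (addConv_comm m n ▸ h_le_one) hψ hm
    rw [← addConv_comm, mul_comm] at this
    omega
  push Not at hm₂ hn₂
  have hq_le_m : q ≤ ∑ φ, m φ :=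
    h_zero ▸ addConv_le_sum_left (fun ψ => Nat.le_of_lt_succ (hn₂ ψ)) 0
  have hq_le_n : q ≤ ∑ ψ, n ψ :=
    h_zero ▸ addConv_comm m n ▸ addConv_le_sum_left (fun φ => Nat.le_of_lt_succ (hm₂ φ)) 0
  nlinarith [Nat.mul_le_mul hq_le_m hq_le_n]

end AddConv

lemma AddChar.sum_apply_ofMul_inv {G : Type*} [CommGroup G] [Fintype G]
    (ψ : AddChar (Additive G) ℂ) [Decidable (ψ = 0)] :
    ∑ g : G, ψ (.ofMul g⁻¹) = if ψ = 0 then (Fintype.card G : ℂ) else 0 := by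
  rw [Fintype.sum_equiv (Equiv.inv G) (fun g => ψ (.ofMul g⁻¹)) (fun g => ψ (.ofMul g))
    fun _ => rfl, Fintype.sum_equiv Additive.ofMul _ ψ fun _ => rfl, AddChar.sum_eq_ite]
  simp

namespace FDRep

variable {G : Type} [CommGroup G]

-- Characters of `G` are taken as `AddChar (Additive G) ℂ`, the dual on which Mathlib has
-- Pontryagin duality for finite abelian groups.
noncomputable def ofAddChar (ψ : AddChar (Additive G) ℂ) : FDRep ℂ G :=
  FDRep.of ((Algebra.lsmul ℂ ℂ ℂ).toMonoidHom.comp (ψ.toMonoidHom : G →* ℂ))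

@[simp]
lemma character_ofAddChar (ψ : AddChar (Additive G) ℂ) (g : G) :
    (ofAddChar ψ).character g = ψ (.ofMul g) := by
  change LinearMap.trace ℂ ℂ (Algebra.lsmul ℂ ℂ ℂ (ψ (.ofMul g))) = _
  simp [LinearMap.trace_eq_matrix_trace ℂ (Module.Basis.singleton Unit ℂ)]

variable [Fintype G]

noncomputable def multiplicity (X : FDRep ℂ G) (ψ : AddChar (Additive G) ℂ) : ℕ :=
  Module.finrank ℂ (ofAddChar ψ ⟶ X)

lemma card_mul_multiplicity (X : FDRep ℂ G) (ψ : AddChar (Additive G) ℂ) :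
    (Fintype.card G : ℂ) * X.multiplicity ψ = ∑ g : G, X.character g * ψ (.ofMul g⁻¹) := by
  have hG : (Nat.card G : ℂ) ≠ 0 := Nat.cast_ne_zero.mpr Nat.card_pos.ne'
  have := invertibleOfNonzero hG
  rw [multiplicity, ← scalar_product_char_eq_finrank_equivariant, Fintype.card_eq_nat_card,
    mul_inv_cancel_left₀ hG]
  simp only [character_ofAddChar]

lemma character_eq_sum_multiplicity (X : FDRep ℂ G) (g : G) :
    X.character g = ∑ ψ, X.multiplicity ψ * ψ (.ofMul g) := by
  classical
  have hG : (Fintype.card G : ℂ) ≠ 0 := Nat.cast_ne_zero.mpr Fintype.card_ne_zero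
  refine mul_left_cancel₀ hG ?_
  calc (Fintype.card G : ℂ) * X.character g
      = ∑ h : G, X.character h * ∑ ψ : AddChar (Additive G) ℂ, ψ (.ofMul (h⁻¹ * g)) := by
        simp only [AddChar.sum_apply_eq_ite, ofMul_eq_zero, inv_mul_eq_one, mul_ite, mul_zero]
        simp [mul_comm]
    _ = ∑ ψ : AddChar (Additive G) ℂ, (∑ h : G, X.character h * ψ (.ofMul h⁻¹)) * ψ (.ofMul g) := by
        simp only [ofMul_mul, AddChar.map_add_eq_mul, Finset.mul_sum, Finset.sum_mul]
        rw [Finset.sum_comm]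
        exact sum_congr rfl fun _ _ => sum_congr rfl fun _ _ => (mul_assoc _ _ _).symm
    _ = (Fintype.card G : ℂ) * ∑ ψ, X.multiplicity ψ * ψ (.ofMul g) := by
        simp only [← card_mul_multiplicity, Finset.mul_sum, mul_assoc]

lemma finrank_eq_sum_multiplicity (X : FDRep ℂ G) :
    Module.finrank ℂ X = ∑ ψ, X.multiplicity ψ := by
  have := X.character_eq_sum_multiplicity 1
  simp only [char_one, ofMul_one, AddChar.map_zero_eq_one, mul_one] at this
  exact_mod_cast this

lemma multiplicity_tensor (X Y : FDRep ℂ G) :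
    (X ⊗ Y).multiplicity = addConv X.multiplicity Y.multiplicity := by
  ext μ
  have hG : (Fintype.card G : ℂ) ≠ 0 := Nat.cast_ne_zero.mpr Fintype.card_ne_zero
  refine Nat.cast_injective (R := ℂ) (mul_left_cancel₀ hG ?_)
  calc (Fintype.card G : ℂ) * (X ⊗ Y).multiplicity μ
      = ∑ ψ, Y.multiplicity ψ * ∑ g : G, X.character g * (μ - ψ) (.ofMul g⁻¹) := by
        simp only [card_mul_multiplicity, char_tensor, Pi.mul_apply,
          character_eq_sum_multiplicity Y, AddChar.sub_apply, ofMul_inv, neg_neg,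
          Finset.mul_sum, Finset.sum_mul]
        rw [Finset.sum_comm]
        exact sum_congr rfl fun _ _ => sum_congr rfl fun _ _ => by ring
    _ = (Fintype.card G : ℂ) * addConv X.multiplicity Y.multiplicity μ := by
        simp only [← card_mul_multiplicity, addConv, Nat.cast_sum, Nat.cast_mul, Finset.mul_sum]
        exact sum_congr rfl fun _ _ => by ring

lemma multiplicity_eq_ite_of_character [DecidableEq G] (X : FDRep ℂ G)
    (hX : ∀ g, X.character g =
      if g = 1 then 2 * (Fintype.card G : ℂ) - 1 else (Fintype.card G : ℂ) - 1)
    (ψ : AddChar (Additive G) ℂ) [Decidable (ψ = 0)] :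
    X.multiplicity ψ = if ψ = 0 then Fintype.card G else 1 := by
  set q : ℂ := ((Fintype.card G : ℕ) : ℂ) with hq_def
  have hq : q ≠ 0 := Nat.cast_ne_zero.mpr Fintype.card_ne_zero
  refine Nat.cast_injective (R := ℂ) (mul_left_cancel₀ hq ?_)
  calc q * X.multiplicity ψ
      = ∑ g : G, ((q - 1) + if g = 1 then q else 0) * ψ (.ofMul g⁻¹) := by
        rw [card_mul_multiplicity]
        refine sum_congr rfl fun g _ => ?_
        rw [hX]
        split_ifs <;> ring
    _ = (q - 1) * (if ψ = 0 then q else 0) + q := by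
        simp only [add_mul, sum_add_distrib, ← mul_sum, AddChar.sum_apply_ofMul_inv, ite_mul,
          zero_mul, sum_ite_eq', mem_univ, if_true, inv_one, ofMul_one, AddChar.map_zero_eq_one,
          mul_one, ← hq_def]
    _ = q * ((if ψ = 0 then Fintype.card G else 1 : ℕ) : ℂ) := by
        split_ifs
        · rw [← hq_def]; ring
        · simp

end FDRep

theorem tensor_indecomposable_general
    (p f : ℕ)
    (Q : Type) [CommGroup Q] [Fintype Q]
    (hcard : Fintype.card Q = p ^ f)
    (V : FDRep ℂ Q)
    (hdim : Module.finrank ℂ V = 2 * p ^ f - 1)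
    (htr : ∀ g : Q, g ≠ 1 → FDRep.character V g = (p ^ f : ℂ) - 1) :
    ¬ ∃ X₁ X₂ : FDRep ℂ Q,
        2 ≤ Module.finrank ℂ X₁ ∧ 2 ≤ Module.finrank ℂ X₂ ∧
        Nonempty (V ≅ X₁ ⊗ X₂) := by
  classical
  rintro ⟨X₁, X₂, h₁, h₂, ⟨e⟩⟩
  have hχ : ∀ g, (X₁ ⊗ X₂).character g =
      if g = 1 then 2 * (Fintype.card Q : ℂ) - 1 else (Fintype.card Q : ℂ) - 1 := by
    intro g
    rw [← FDRep.char_iso e, hcard]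
    split_ifs with hg
    · have : 0 < p ^ f := hcard ▸ Fintype.card_pos
      rw [hg, FDRep.char_one, hdim, Nat.cast_sub (by omega)]
      push_cast; ring
    · exact_mod_cast htr g hg
  refine addConv_ne_ite (X₁.finrank_eq_sum_multiplicity ▸ h₁)
    (X₂.finrank_eq_sum_multiplicity ▸ h₂) (funext fun μ => ?_)
  rw [← FDRep.multiplicity_tensor, (X₁ ⊗ X₂).multiplicity_eq_ite_of_character hχ,
    AddChar.card_eq]
  simp

/-- Let `p` be an odd prime, `q = p^f > 1`, `Q` an elementary abelian `p`-group of
order `q`, and `V` a finite-dimensional complex representation of `Q` with `χ(1) = 2q - 1` and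
`χ(g) = q - 1` for all `g ≠ 1`.  Then `V` is tensor indecomposable: it is not isomorphic (as a
representation of `Q`) to a tensor product `X₁ ⊗ X₂` with `dim Xᵢ ≥ 2`. -/
theorem tensor_indecomposable
    (p f : ℕ) (hp : p.Prime) (hodd : Odd p) (hf : 0 < f)
    (Q : Type) [CommGroup Q] [Fintype Q]
    (hcard : Fintype.card Q = p ^ f)
    (hexp : ∀ g : Q, g ^ p = 1)
    (V : FDRep ℂ Q)
    (hdim : Module.finrank ℂ V = 2 * p ^ f - 1)
    (htr : ∀ g : Q, g ≠ 1 → FDRep.character V g = (p ^ f : ℂ) - 1) :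
    ¬ ∃ X₁ X₂ : FDRep ℂ Q,
        2 ≤ Module.finrank ℂ X₁ ∧ 2 ≤ Module.finrank ℂ X₂ ∧
        Nonempty (V ≅ X₁ ⊗ X₂) :=
  tensor_indecomposable_general p f Q hcard V hdim htr
end

section
/- Let p be an odd prime and q a power of p. Let V be a complex vector space of dimension 2q-1 equipped with a nondegenerate symmetric bilinear form B, and let G be a group of linear automorphisms of V preserving B and acting irreducibly on V. Suppose G contains a finite abelian p-subgroup Q whose fixed subspace V^Q = {v ∈ V : g·v = v for all g ∈ Q} has dimension exactly 1. Then G preserves no nontrivial orthogonal decomposition of V: there is no decomposition V = W₁ ⊕ ⋯ ⊕ W_r with r ≥ 2, each Wᵢ nonzero, the Wᵢ pairwise orthogonal with respect to B, such that every element of G permutes the set {W₁, …, W_r}. -/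
open Module LinearMap Matrix

lemma even_finrank_of_no_fixed
    (U : Type) [AddCommGroup U] [Module ℂ U] [FiniteDimensional ℂ U]
    (B : U →ₗ[ℂ] U →ₗ[ℂ] ℂ)
    (hnd : ∀ v : U, (∀ w : U, B v w = 0) → v = 0)
    (h : Module.End ℂ U) (m : ℕ) (hm : Odd m) (hh : h ^ m = 1)
    (hiso : ∀ v w, B (h v) (h w) = B v w)
    (hfree : ∀ v, h v = v → v = 0) :
    Even (Module.finrank ℂ U) := by
  set d := Module.finrank ℂ U with hd
  let b : Basis (Fin d) ℂ U := Module.finBasis ℂ U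
  set M : Matrix (Fin d) (Fin d) ℂ := LinearMap.toMatrix b b h with hM
  set Φ : Matrix (Fin d) (Fin d) ℂ := Matrix.of (fun i j => B (b i) (b j)) with hΦ
  -- expansion of h (b i)
  have hexp : ∀ i, h (b i) = ∑ k, M k i • b k := by
    intro i
    conv_lhs => rw [← b.sum_repr (h (b i))]
    refine Finset.sum_congr rfl fun k _ => ?_
    rw [hM, LinearMap.toMatrix_apply]
  -- invariance in matrix form
  have hinv : Mᵀ * Φ * M = Φ := by
    ext i j
    have this : B (h (b i)) (h (b j)) = B (b i) (b j) := hiso _ _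
    rw [hexp, hexp] at this
    simp only [map_sum, LinearMap.map_smul, LinearMap.sum_apply, LinearMap.smul_apply,
      smul_eq_mul] at this
    rw [Matrix.mul_apply]
    calc ∑ l, (Mᵀ * Φ) i l * M l j
        = ∑ l, ∑ k, M k i * (M l j * B (b k) (b l)) := by
          refine Finset.sum_congr rfl fun l _ => ?_
          rw [Matrix.mul_apply, Finset.sum_mul]
          refine Finset.sum_congr rfl fun k _ => ?_
          simp only [Matrix.transpose_apply, hΦ, Matrix.of_apply]
          ring
      _ = B (b i) (b j) := this
      _ = Φ i j := rfl
  -- Φ invertible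
  have hΦdet : Φ.det ≠ 0 := by
    intro h0
    obtain ⟨x, hx0, hx⟩ := Matrix.exists_vecMul_eq_zero_iff.mpr h0
    set v : U := ∑ i, x i • b i with hv
    have hBv : ∀ j, B v (b j) = 0 := by
      intro j
      have := congrFun hx j
      simp only [Matrix.vecMul, dotProduct, Pi.zero_apply] at this
      rw [hv]
      simp only [map_sum, LinearMap.map_smul, LinearMap.sum_apply, LinearMap.smul_apply,
        smul_eq_mul]
      simpa [hΦ] using this
    have hBv' : ∀ w, B v w = 0 := by
      intro w
      have : (B v) = 0 := b.ext (fun j => by simpa using hBv j)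
      simp [this]
    have hv0 : v = 0 := hnd v hBv'
    apply hx0
    have hli := b.linearIndependent
    rw [Fintype.linearIndependent_iff] at hli
    funext i
    exact hli x (by rw [← hv, hv0]) i
  -- det M = 1
  have hMm : M ^ m = 1 := by
    have hpow : ∀ n : ℕ, M ^ n = LinearMap.toMatrix b b (h ^ n) := by
      intro n
      induction n with
      | zero => simp [LinearMap.toMatrix_one]
      | succ n ih => rw [pow_succ, pow_succ, ih, LinearMap.toMatrix_mul]
    rw [hpow, hh, LinearMap.toMatrix_one]
  have hdetM2 : (M.det - 1) * (M.det + 1) = 0 := by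
    have h0 := congrArg Matrix.det hinv
    rw [Matrix.det_mul, Matrix.det_mul, Matrix.det_transpose] at h0
    have h2 : (M.det * M.det - 1) * Φ.det = 0 := by linear_combination h0
    rcases mul_eq_zero.mp h2 with h3 | h3
    · linear_combination h3
    · exact absurd h3 hΦdet
  have hdetMm : M.det ^ m = 1 := by
    rw [← Matrix.det_pow, hMm, Matrix.det_one]
  have hdetM : M.det = 1 := by
    rcases mul_eq_zero.mp hdetM2 with h1 | h1
    · exact sub_eq_zero.mp h1
    · exfalso
      have hneg : M.det = -1 := eq_neg_of_add_eq_zero_left h1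
      rw [hneg, hm.neg_one_pow] at hdetMm
      exact absurd hdetMm (by norm_num)
  -- det (1 - M) ≠ 0
  have hdetN : (1 - M).det ≠ 0 := by
    intro h0
    obtain ⟨x, hx0, hx⟩ := Matrix.exists_mulVec_eq_zero_iff.mpr h0
    set v : U := b.equivFun.symm x with hv
    have hrepr : ⇑(b.repr v) = x := by
      have h7 : b.equivFun v = x := by rw [hv]; exact b.equivFun.apply_symm_apply x
      rw [← Basis.equivFun_apply, h7]
    have : (1 - M).mulVec (⇑(b.repr v)) = 0 := by rw [hrepr]; exact hx
    have hN : (1 : Matrix (Fin d) (Fin d) ℂ) - M = LinearMap.toMatrix b b (1 - h) := by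
      rw [map_sub, hM]; congr 1
      exact (LinearMap.toMatrix_one b).symm
    rw [hN, LinearMap.toMatrix_mulVec_repr] at this
    have hv1 : (1 - h) v = 0 := by
      have h5 : b.repr ((1 - h) v) = 0 := Finsupp.coe_eq_zero.mp this
      exact (LinearEquiv.map_eq_zero_iff b.repr).mp h5
    have : h v = v := by
      have := sub_eq_zero.mp (by simpa [LinearMap.sub_apply] using hv1)
      simpa using this.symm
    have := hfree v this
    apply hx0
    rw [← hrepr, this]
    simp
  -- final identity
  have key : (Mᵀ - 1) * Φ * M = Φ * (1 - M) := by
    rw [Matrix.sub_mul, Matrix.sub_mul, hinv, Matrix.one_mul, Matrix.mul_sub, Matrix.mul_one]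
  have hdetkey := congrArg Matrix.det key
  rw [Matrix.det_mul, Matrix.det_mul, Matrix.det_mul] at hdetkey
  have hT : (Mᵀ - 1).det = (M - 1).det := by
    rw [show Mᵀ - 1 = (M - 1)ᵀ by rw [Matrix.transpose_sub, Matrix.transpose_one]]
    exact Matrix.det_transpose _
  have hneg : (M - 1).det = (-1 : ℂ) ^ d * (1 - M).det := by
    rw [(neg_sub (1 : Matrix (Fin d) (Fin d) ℂ) M).symm, Matrix.det_neg, Fintype.card_fin]
  rw [hT, hneg, hdetM, mul_one] at hdetkey
  -- (-1)^d * det(1-M) * det Φ = det Φ * det (1-M)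
  have : (-1 : ℂ) ^ d = 1 := by
    have h4 : ((-1 : ℂ) ^ d - 1) * ((1 - M).det * Φ.det) = 0 := by linear_combination hdetkey
    rcases mul_eq_zero.mp h4 with h5 | h5
    · linear_combination h5
    · rcases mul_eq_zero.mp h5 with h6 | h6
      · exact absurd h6 hdetN
      · exact absurd h6 hΦdet
  rw [neg_one_pow_eq_one_iff_even (by norm_num : (-1 : ℂ) ≠ 1)] at this
  exact this

section Parity

variable (U : Type) [AddCommGroup U] [Module ℂ U] [FiniteDimensional ℂ U]

lemma fixed_range_disjoint (g : Module.End ℂ U) (m : ℕ) (hm0 : m ≠ 0) (hg : g ^ m = 1) :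
    Disjoint (LinearMap.ker (g - 1)) (LinearMap.range (g - 1)) := by
  rw [Submodule.disjoint_def]
  intro v hvK hvD
  obtain ⟨w, hw⟩ := hvD
  have h1 : g v = v := by
    have := LinearMap.mem_ker.mp hvK
    rw [LinearMap.sub_apply, Module.End.one_apply, sub_eq_zero] at this
    exact this
  have hpow : ∀ i : ℕ, (g ^ i) v = v := by
    intro i
    induction i with
    | zero => rfl
    | succ i ih => rw [pow_succ, Module.End.mul_apply, h1, ih]
  have hgeo : (∑ i ∈ Finset.range m, g ^ i) ((g - 1) w) = ((g : Module.End ℂ U) ^ m - 1) w := by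
    rw [← Module.End.mul_apply, geom_sum_mul]
  rw [hw, hg, sub_self, LinearMap.zero_apply, LinearMap.sum_apply] at hgeo
  have hsum : (∑ i ∈ Finset.range m, (g ^ i) v) = (m : ℂ) • v := by
    rw [Finset.sum_congr rfl fun i _ => hpow i]
    simp [Finset.sum_const, ← Nat.cast_smul_eq_nsmul ℂ]
  rw [hsum] at hgeo
  rcases smul_eq_zero.mp hgeo with h | h
  · exact absurd h (by exact_mod_cast hm0)
  · exact h

lemma fixed_ortho_range (B : U →ₗ[ℂ] U →ₗ[ℂ] ℂ) (g : Module.End ℂ U)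
    (hiso : ∀ v w, B (g v) (g w) = B v w)
    (v : U) (hv : v ∈ LinearMap.ker (g - 1)) (w : U) :
    B v ((g - 1) w) = 0 := by
  have h1 : g v = v := by
    have := LinearMap.mem_ker.mp hv
    rw [LinearMap.sub_apply, Module.End.one_apply, sub_eq_zero] at this
    exact this
  have : B v (g w) = B v w := by conv_lhs => rw [← h1, hiso]
  rw [LinearMap.sub_apply, Module.End.one_apply, map_sub, this, sub_self]

lemma fixed_sup_range (g : Module.End ℂ U) (m : ℕ) (hm0 : m ≠ 0) (hg : g ^ m = 1) :
    LinearMap.ker (g - 1) ⊔ LinearMap.range (g - 1) = ⊤ := by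
  apply Submodule.eq_top_of_finrank_eq
  have hdisj := fixed_range_disjoint U g m hm0 hg
  have h1 := Submodule.finrank_sup_add_finrank_inf_eq (LinearMap.ker (g - 1))
      (LinearMap.range (g - 1))
  rw [disjoint_iff.mp hdisj, finrank_bot, add_zero] at h1
  have h2 := LinearMap.finrank_range_add_finrank_ker (g - 1)
  omega

end Parity

section Parity2

variable (U : Type) [AddCommGroup U] [Module ℂ U] [FiniteDimensional ℂ U]

lemma g_fixed_iff (g : Module.End ℂ U) (v : U) :
    v ∈ LinearMap.ker (g - 1) ↔ g v = v := by
  rw [LinearMap.mem_ker, LinearMap.sub_apply, Module.End.one_apply, sub_eq_zero]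

lemma even_finrank_range
    (B : U →ₗ[ℂ] U →ₗ[ℂ] ℂ)
    (hsymm : ∀ v w, B v w = B w v)
    (hnd : ∀ v : U, (∀ w : U, B v w = 0) → v = 0)
    (g : Module.End ℂ U) (m : ℕ) (hm : Odd m) (hg : g ^ m = 1)
    (hiso : ∀ v w, B (g v) (g w) = B v w) :
    Even (Module.finrank ℂ ↥(LinearMap.range (g - 1))) := by
  have hm0 : m ≠ 0 := by rintro rfl; simp at hm
  set K := LinearMap.ker (g - 1) with hK
  set D := LinearMap.range (g - 1) with hD
  have hdisj := fixed_range_disjoint U g m hm0 hg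
  have hsup := fixed_sup_range U g m hm0 hg
  have hmaps : ∀ x ∈ D, g x ∈ D := by
    intro x hx
    obtain ⟨w, hw⟩ := hx
    refine ⟨g w, ?_⟩
    have : (g - 1) * g = g * (g - 1) := by rw [sub_mul, mul_sub, one_mul, mul_one]
    calc (g - 1) (g w) = ((g - 1) * g) w := rfl
      _ = (g * (g - 1)) w := by rw [this]
      _ = g ((g - 1) w) := rfl
      _ = g x := by rw [hw]
  set h : Module.End ℂ ↥D := g.restrict hmaps with hh
  have hpow : h ^ m = 1 := by
    rw [hh, Module.End.pow_restrict m hmaps]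
    ext x
    simp [LinearMap.restrict_apply, hg]
  set B' : ↥D →ₗ[ℂ] ↥D →ₗ[ℂ] ℂ := B.domRestrict₁₂ D D with hB'
  have hB'app : ∀ v w : ↥D, B' v w = B (↑v) (↑w) := fun v w => rfl
  have horthKD : ∀ u ∈ K, ∀ x ∈ D, B u x = 0 := by
    intro u hu x hx
    obtain ⟨w, hw⟩ := hx
    rw [← hw]
    exact fixed_ortho_range U B g hiso u hu w
  have hnd' : ∀ v : ↥D, (∀ w : ↥D, B' v w = 0) → v = 0 := by
    intro v hv
    have : (↑v : U) = 0 := by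
      apply hnd
      intro u
      have hu : u ∈ K ⊔ D := by rw [hsup]; trivial
      obtain ⟨a, ha, b, hb, rfl⟩ := Submodule.mem_sup.mp hu
      rw [map_add]
      have h1 : B (↑v) a = 0 := by
        rw [hsymm]
        exact horthKD a ha (↑v) v.2
      have h2 : B (↑v) b = 0 := hv ⟨b, hb⟩
      rw [h1, h2, add_zero]
    exact Subtype.ext this
  have hiso' : ∀ v w : ↥D, B' (h v) (h w) = B' v w := by
    intro v w
    rw [hB'app, hB'app, hh]
    simp only [LinearMap.restrict_apply]
    exact hiso _ _
  have hfree : ∀ v : ↥D, h v = v → v = 0 := by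
    intro v hv
    have h1 : g (↑v) = ↑v := by
      have := congrArg Subtype.val hv
      simpa [hh, LinearMap.restrict_apply] using this
    have h2 : (↑v : U) ∈ K := (g_fixed_iff U g _).mpr h1
    have := Submodule.disjoint_def.mp hdisj _ h2 v.2
    exact Subtype.ext this
  exact even_finrank_of_no_fixed ↥D B' hnd' h m hm hpow hiso' hfree

lemma odd_finrank_ker
    (B : U →ₗ[ℂ] U →ₗ[ℂ] ℂ)
    (hsymm : ∀ v w, B v w = B w v)
    (hnd : ∀ v : U, (∀ w : U, B v w = 0) → v = 0)
    (g : Module.End ℂ U) (m : ℕ) (hm : Odd m) (hg : g ^ m = 1)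
    (hiso : ∀ v w, B (g v) (g w) = B v w)
    (hodd : Odd (Module.finrank ℂ U)) :
    Odd (Module.finrank ℂ ↥(LinearMap.ker (g - 1))) := by
  have heven := even_finrank_range U B hsymm hnd g m hm hg hiso
  have h2 := LinearMap.finrank_range_add_finrank_ker (g - 1)
  obtain ⟨a, ha⟩ := heven
  obtain ⟨b, hb⟩ := hodd
  refine ⟨b - a, ?_⟩
  omega

lemma nondeg_on_ker
    (B : U →ₗ[ℂ] U →ₗ[ℂ] ℂ)
    (hsymm : ∀ v w, B v w = B w v)
    (hnd : ∀ v : U, (∀ w : U, B v w = 0) → v = 0)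
    (g : Module.End ℂ U) (m : ℕ) (hm0 : m ≠ 0) (hg : g ^ m = 1)
    (hiso : ∀ v w, B (g v) (g w) = B v w) :
    ∀ v ∈ LinearMap.ker (g - 1), (∀ w ∈ LinearMap.ker (g - 1), B v w = 0) → v = 0 := by
  intro v hv hvK
  have hsup := fixed_sup_range U g m hm0 hg
  apply hnd
  intro u
  have hu : u ∈ LinearMap.ker (g - 1) ⊔ LinearMap.range (g - 1) := by rw [hsup]; trivial
  obtain ⟨a, ha, b, hb, rfl⟩ := Submodule.mem_sup.mp hu
  rw [map_add]
  have h1 : B v a = 0 := hvK a ha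
  have h2 : B v b = 0 := by
    obtain ⟨w, hw⟩ := hb
    rw [← hw]
    exact fixed_ortho_range U B g hiso v hv w
  rw [h1, h2, add_zero]

end Parity2

lemma exists_fixed_vector :
    ∀ (n : ℕ) (U : Type) [AddCommGroup U] [Module ℂ U] [FiniteDimensional ℂ U],
      Module.finrank ℂ U = n → Odd n →
      ∀ (B : U →ₗ[ℂ] U →ₗ[ℂ] ℂ),
        (∀ v w, B v w = B w v) → (∀ v, (∀ w, B v w = 0) → v = 0) →
        ∀ (s : Set (Module.End ℂ U)),
          (∀ g ∈ s, ∀ g' ∈ s, g * g' = g' * g) →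
          (∀ g ∈ s, ∃ m : ℕ, Odd m ∧ g ^ m = 1) →
          (∀ g ∈ s, ∀ v w, B (g v) (g w) = B v w) →
          ∃ v : U, v ≠ 0 ∧ ∀ g ∈ s, g v = v := by
  intro n
  induction n using Nat.strong_induction_on with
  | _ n IH =>
    intro U _ _ _ hrank hodd B hsymm hnd s hcomm hord hiso
    by_cases htriv : ∀ g ∈ s, ∀ v : U, g v = v
    · have hpos : 0 < Module.finrank ℂ U := by
        rw [hrank]; exact hodd.pos
      have : Nontrivial U := Module.nontrivial_of_finrank_pos hpos
      obtain ⟨v, hv⟩ := exists_ne (0 : U)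
      exact ⟨v, hv, fun g hg => htriv g hg v⟩
    · push_neg at htriv
      obtain ⟨g, hg, v₀, hv₀⟩ := htriv
      obtain ⟨m, hm, hgm⟩ := hord g hg
      have hm0 : m ≠ 0 := by rintro rfl; simp at hm
      set K := LinearMap.ker (g - 1) with hKdef
      have hKne : K ≠ ⊤ := by
        intro hKtop
        apply hv₀
        have : v₀ ∈ K := by rw [hKtop]; trivial
        exact (g_fixed_iff U g v₀).mp this
      have hKlt : Module.finrank ℂ ↥K < n := by
        rw [← hrank]
        exact Submodule.finrank_lt hKne
      have hKodd : Odd (Module.finrank ℂ ↥K) :=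
        odd_finrank_ker U B hsymm hnd g m hm hgm (hiso g hg) (hrank ▸ hodd)
      -- restrict everything to K
      have hmaps : ∀ g' ∈ s, ∀ x ∈ K, g' x ∈ K := by
        intro g' hg' x hx
        rw [g_fixed_iff] at hx ⊢
        calc g (g' x) = (g * g') x := rfl
          _ = (g' * g) x := by rw [hcomm g hg g' hg']
          _ = g' (g x) := rfl
          _ = g' x := by rw [hx]
      set B' : ↥K →ₗ[ℂ] ↥K →ₗ[ℂ] ℂ := B.domRestrict₁₂ K K with hB'
      have hB'app : ∀ v w : ↥K, B' v w = B (↑v) (↑w) := fun v w => rfl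
      have hnd' : ∀ v : ↥K, (∀ w : ↥K, B' v w = 0) → v = 0 := by
        intro v hv
        refine Subtype.ext (nondeg_on_ker U B hsymm hnd g m hm0 hgm (hiso g hg) ↑v v.2 ?_)
        intro w hw
        exact hv ⟨w, hw⟩
      set s' : Set (Module.End ℂ ↥K) :=
        {e | ∃ g' : Module.End ℂ U, ∃ hg' : g' ∈ s, e = g'.restrict (hmaps g' hg')} with hs'
      have hrestrict_mul : ∀ (g₁ g₂ : Module.End ℂ U) (h₁ : ∀ x ∈ K, g₁ x ∈ K)
          (h₂ : ∀ x ∈ K, g₂ x ∈ K) (h₃ : ∀ x ∈ K, (g₁ * g₂) x ∈ K),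
          g₁.restrict h₁ * g₂.restrict h₂ = (g₁ * g₂).restrict h₃ := by
        intro g₁ g₂ h₁ h₂ h₃
        ext x
        simp [LinearMap.restrict_apply, Module.End.mul_apply]
      have hcomm' : ∀ e ∈ s', ∀ e' ∈ s', e * e' = e' * e := by
        rintro e ⟨g₁, hg₁, rfl⟩ e' ⟨g₂, hg₂, rfl⟩
        have hc := hcomm g₁ hg₁ g₂ hg₂
        have m12 : ∀ x ∈ K, (g₁ * g₂) x ∈ K := fun x hx =>
          hmaps g₁ hg₁ _ (hmaps g₂ hg₂ x hx)
        have m21 : ∀ x ∈ K, (g₂ * g₁) x ∈ K := fun x hx =>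
          hmaps g₂ hg₂ _ (hmaps g₁ hg₁ x hx)
        rw [hrestrict_mul g₁ g₂ _ _ m12, hrestrict_mul g₂ g₁ _ _ m21]
        ext x
        simp only [LinearMap.restrict_apply]
        rw [hc]
      have hord' : ∀ e ∈ s', ∃ m' : ℕ, Odd m' ∧ e ^ m' = 1 := by
        rintro e ⟨g₁, hg₁, rfl⟩
        obtain ⟨m₁, hm₁, hgm₁⟩ := hord g₁ hg₁
        refine ⟨m₁, hm₁, ?_⟩
        rw [Module.End.pow_restrict m₁]
        ext x
        simp [LinearMap.restrict_apply, hgm₁]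
      have hiso' : ∀ e ∈ s', ∀ v w : ↥K, B' (e v) (e w) = B' v w := by
        rintro e ⟨g₁, hg₁, rfl⟩ v w
        rw [hB'app, hB'app]
        simp only [LinearMap.restrict_apply]
        exact hiso g₁ hg₁ _ _
      obtain ⟨v', hv'0, hv'fix⟩ := IH (Module.finrank ℂ ↥K) hKlt ↥K rfl hKodd B' (fun v w => hsymm _ _)
        hnd' s' hcomm' hord' hiso'
      refine ⟨↑v', fun h0 => hv'0 (Subtype.ext h0), ?_⟩
      intro g' hg'
      have := hv'fix (g'.restrict (hmaps g' hg')) ⟨g', hg', rfl⟩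
      have := congrArg Subtype.val this
      simpa [LinearMap.restrict_apply] using this

/-- Let `q` be a power of an odd prime `p`, `V` a complex vector space of dimension
`2q - 1` with a nondegenerate symmetric bilinear form `B`, and `G` a group of linear automorphisms
of `V` preserving `B` and acting irreducibly.  If `G` contains a finite abelian `p`-subgroup `Q`
whose fixed subspace has dimension exactly `1`, then `G` preserves no nontrivial orthogonal
decomposition of `V`. -/
theorem no_orthogonal_decomposition
    (p f : ℕ) (hp : p.Prime) (hodd : Odd p) (hf : 0 < f)
    (V : Type) [AddCommGroup V] [Module ℂ V] [FiniteDimensional ℂ V]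
    (hdim : Module.finrank ℂ V = 2 * p ^ f - 1)
    (B : V →ₗ[ℂ] V →ₗ[ℂ] ℂ)
    (hsymm : ∀ v w : V, B v w = B w v)
    (hnd : ∀ v : V, (∀ w : V, B v w = 0) → v = 0)
    (G : Subgroup (V ≃ₗ[ℂ] V))
    (hpres : ∀ g ∈ G, ∀ v w : V, B (g v) (g w) = B v w)
    (hirr : ∀ W : Submodule ℂ V, (∀ g ∈ G, ∀ v ∈ W, g v ∈ W) → W = ⊥ ∨ W = ⊤)
    (Q : Subgroup (V ≃ₗ[ℂ] V)) (hQG : Q ≤ G) [Finite Q]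
    (hQcomm : ∀ a b : Q, a * b = b * a)
    (hQp : ∀ g : Q, ∃ k : ℕ, g ^ (p ^ k) = 1)
    (hfix : Module.finrank ℂ ↥
      (⨅ g : Q, LinearMap.ker (((g : V ≃ₗ[ℂ] V) : V →ₗ[ℂ] V) - LinearMap.id)) = 1) :
    ¬ ∃ (r : ℕ) (W : Fin r → Submodule ℂ V),
        2 ≤ r ∧ (∀ i, W i ≠ ⊥) ∧
        DirectSum.IsInternal W ∧
        (∀ i j, i ≠ j → ∀ v ∈ W i, ∀ w ∈ W j, B v w = 0) ∧
        (∀ g ∈ G, ∀ i, ∃ j, (W i).map ((g : V ≃ₗ[ℂ] V) : V →ₗ[ℂ] V) = W j) := by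
  rintro ⟨r, W, hr, hne, hint, horth, hperm⟩
  classical
  obtain ⟨hind, hsup⟩ :=
    (DirectSum.isInternal_submodule_iff_iSupIndep_and_iSup_eq_top W).mp hint
  -- blocks are distinct
  have hWinj : ∀ i j : Fin r, W i = W j → i = j := by
    intro i j hij
    by_contra hij'
    have hdisj : Disjoint (W i) (W j) := hind.pairwiseDisjoint hij'
    rw [hij] at hdisj
    exact hne j (disjoint_self.mp hdisj)
  -- the permutation induced by an element of Q
  have hPerm : ∀ q : ↥Q, ∀ i : Fin r,
      ∃ j, (W i).map (((q : V ≃ₗ[ℂ] V)) : V →ₗ[ℂ] V) = W j :=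
    fun q i => hperm _ (hQG q.2) i
  choose π hπ using hPerm
  have hπ_mul : ∀ (a b : ↥Q) (i : Fin r), π (a * b) i = π a (π b i) := by
    intro a b i
    apply hWinj
    rw [← hπ, ← hπ, ← hπ, ← Submodule.map_comp]
    congr 1
  have hπ_one : ∀ i, π (1 : ↥Q) i = i := by
    intro i
    apply hWinj
    rw [← hπ]
    simp
  -- the permutation as an Equiv.Perm, and the action of Q on Fin r
  let φ : ↥Q →* Equiv.Perm (Fin r) :=
    { toFun := fun q => ⟨π q, π q⁻¹,
        fun i => by rw [← hπ_mul, inv_mul_cancel, hπ_one],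
        fun i => by rw [← hπ_mul, mul_inv_cancel, hπ_one]⟩
      map_one' := by
        ext i
        simp only [Equiv.coe_fn_mk, Equiv.Perm.coe_one, id_eq]
        exact congrArg Fin.val (hπ_one i)
      map_mul' := fun a b => by
        ext i
        simp only [Equiv.coe_fn_mk, Equiv.Perm.coe_mul, Function.comp_apply]
        exact congrArg Fin.val (hπ_mul a b i) }
  letI act : MulAction ↥Q (Fin r) := MulAction.compHom _ φ
  have hsmul : ∀ (q : ↥Q) (i : Fin r), q • i = π q i := fun q i => rfl
  -- |Q| is a power of p, so orbits have p-power cardinality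
  letI : Fintype ↥Q := Fintype.ofFinite ↥Q
  have hQcard : ∃ k : ℕ, Fintype.card ↥Q = p ^ k := by
    haveI : Fact p.Prime := ⟨hp⟩
    have hpg : IsPGroup p ↥Q := hQp
    obtain ⟨k, hk⟩ := hpg.exists_card_eq
    exact ⟨k, by rw [← Nat.card_eq_fintype_card, hk]⟩
  have horbit_odd : ∀ i : Fin r, Odd (Fintype.card ↥(MulAction.orbit ↥Q i)) := by
    intro i
    obtain ⟨k, hk⟩ := hQcard
    have hdvd : Fintype.card ↥(MulAction.orbit ↥Q i) ∣ Fintype.card ↥Q :=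
      ⟨_, (MulAction.card_orbit_mul_card_stabilizer_eq_card_group ↥Q i).symm⟩
    rw [hk] at hdvd
    obtain ⟨a, _, ha⟩ := (Nat.dvd_prime_pow hp).mp hdvd
    rw [ha]
    exact hodd.pow
  -- all blocks have the same dimension (G acts transitively on blocks)
  let i0 : Fin r := ⟨0, by omega⟩
  set d := Module.finrank ℂ ↥(W i0) with hd
  have hdim_eq : ∀ j, Module.finrank ℂ ↥(W j) = d := by
    set X : Submodule ℂ V := ⨆ g : ↥G, (W i0).map (((g : V ≃ₗ[ℂ] V)) : V →ₗ[ℂ] V) with hXdef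
    have hstab : ∀ g ∈ G, ∀ v ∈ X, g v ∈ X := by
      intro g hg v hv
      have hmap : Submodule.map ((g : V →ₗ[ℂ] V)) X ≤ X := by
        rw [hXdef, Submodule.map_iSup]
        apply iSup_le
        intro g'
        rw [← Submodule.map_comp]
        have hcoe : ((g : V →ₗ[ℂ] V) ∘ₗ ((g' : V ≃ₗ[ℂ] V) : V →ₗ[ℂ] V)) =
            (((⟨g, hg⟩ * g' : ↥G) : V ≃ₗ[ℂ] V) : V →ₗ[ℂ] V) := by
          ext x; rfl
        rw [hcoe]
        exact le_iSup (fun g'' : ↥G => (W i0).map (((g'' : V ≃ₗ[ℂ] V)) : V →ₗ[ℂ] V))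
          (⟨g, hg⟩ * g')
      exact hmap ⟨v, hv, rfl⟩
    have hWle : W i0 ≤ X := by
      have h1 : (W i0).map (((1 : ↥G) : V ≃ₗ[ℂ] V) : V →ₗ[ℂ] V) = W i0 := by simp
      have h2 := le_iSup (fun g : ↥G => (W i0).map (((g : V ≃ₗ[ℂ] V)) : V →ₗ[ℂ] V)) 1
      rw [h1] at h2
      exact h2
    have hX : X = ⊤ := by
      rcases hirr X hstab with hbot | htop
      · exact absurd (le_bot_iff.mp (hbot ▸ hWle)) (hne i0)
      · exact htop
    intro j
    have hjJ : ∃ g : ↥G, (W i0).map (((g : V ≃ₗ[ℂ] V)) : V →ₗ[ℂ] V) = W j := by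
      by_contra hjJ
      push_neg at hjJ
      set J : Set (Fin r) := {j' | ∃ g : ↥G, (W i0).map (((g : V ≃ₗ[ℂ] V)) : V →ₗ[ℂ] V) = W j'}
        with hJ
      have hjnotJ : j ∉ J := by
        intro hjmem
        obtain ⟨g, hg⟩ := hjmem
        exact hjJ g hg
      have hXle : X ≤ ⨆ j' ∈ J, W j' := by
        rw [hXdef]
        apply iSup_le
        intro g
        obtain ⟨j', hj'⟩ := hperm (↑g) g.2 i0
        rw [hj']
        exact le_biSup W ⟨g, hj'⟩
      have hdisj := hind.disjoint_biSup hjnotJ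
      have hle : W j ≤ ⨆ j' ∈ J, W j' := le_trans (by rw [hX]; exact le_top) hXle
      exact hne j (hdisj.eq_bot_of_le hle)
    obtain ⟨g, hg⟩ := hjJ
    rw [← hg, LinearEquiv.finrank_map_eq]
  -- finrank of independent biSup over a finset
  have hbiSup_rank : ∀ s : Finset (Fin r),
      Module.finrank ℂ ↥(⨆ i ∈ s, W i) = ∑ i ∈ s, Module.finrank ℂ ↥(W i) := by
    intro s
    induction s using Finset.induction_on with
    | empty => simp
    | @insert a s' ha ih =>
      have hsplit : (⨆ i ∈ insert a s', W i) = W a ⊔ ⨆ i ∈ s', W i := by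
        rw [Finset.iSup_insert]
      have hdisj : Disjoint (W a) (⨆ i ∈ s', W i) := by
        have := hind.disjoint_biSup (y := ↑s') (x := a) (by simpa using ha)
        simpa using this
      have h1 := Submodule.finrank_sup_add_finrank_inf_eq (W a) (⨆ i ∈ s', W i)
      rw [disjoint_iff.mp hdisj, finrank_bot, add_zero] at h1
      rw [hsplit, h1, ih, Finset.sum_insert ha]
  -- total dimension
  have htotal : r * d = 2 * p ^ f - 1 := by
    have h1 : (⨆ i ∈ (Finset.univ : Finset (Fin r)), W i) = ⊤ := by
      rw [← hsup]
      simp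
    have h2 := hbiSup_rank Finset.univ
    rw [h1, finrank_top] at h2
    rw [Finset.sum_congr rfl (fun i _ => hdim_eq i), Finset.sum_const, Finset.card_univ,
      Fintype.card_fin, smul_eq_mul] at h2
    rw [← h2, hdim]
  have hrd_odd : Odd (r * d) := by
    rw [htotal]
    have hpf : 1 ≤ p ^ f := Nat.one_le_pow _ _ hp.pos
    exact ⟨p ^ f - 1, by omega⟩
  have hd_odd : Odd d := (Nat.odd_mul.mp hrd_odd).2
  -- orthogonality between sups of disjoint families of blocks
  have horthSup : ∀ (s t : Set (Fin r)), (∀ i ∈ s, ∀ j ∈ t, i ≠ j) →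
      ∀ v ∈ (⨆ i ∈ s, W i), ∀ w ∈ (⨆ j ∈ t, W j), B v w = 0 := by
    intro s t hst v hv w hw
    have step1 : ∀ j ∈ t, ∀ u ∈ W j, B v u = 0 := by
      intro j hj u hu
      have hle : (⨆ i ∈ s, W i) ≤ LinearMap.ker (B.flip u) := by
        refine iSup_le fun i => iSup_le fun hi => ?_
        intro x hx
        simp only [LinearMap.mem_ker, LinearMap.flip_apply]
        exact horth i j (hst i hi j hj) x hx u hu
      have h2 := hle hv
      simpa using h2
    have hle2 : (⨆ j ∈ t, W j) ≤ LinearMap.ker (B v) := by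
      refine iSup_le fun j => iSup_le fun hj => ?_
      intro x hx
      exact LinearMap.mem_ker.mpr (step1 j hj x hx)
    exact LinearMap.mem_ker.mp (hle2 hw)
  -- splitting the space along a set of indices
  have hsplitO : ∀ O : Set (Fin r), (⨆ i ∈ O, W i) ⊔ (⨆ i ∈ Oᶜ, W i) = ⊤ := by
    intro O
    rw [← hsup]
    exact (iSup_split W (· ∈ O)).symm
  have hcompl_ne : ∀ O : Set (Fin r), ∀ i ∈ O, ∀ j ∈ Oᶜ, i ≠ j := by
    intro O i hi j hj
    rintro rfl
    exact hj hi
  -- per-orbit fixed vectors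
  have orbfix : ∀ O : Set (Fin r), (∀ (q : ↥Q), ∀ j ∈ O, π q j ∈ O) →
      Odd (O.toFinset.card) →
      ∃ v : V, v ≠ 0 ∧ v ∈ (⨆ i ∈ O, W i) ∧ ∀ q : ↥Q, (q : V ≃ₗ[ℂ] V) v = v := by
    intro O hOinv hOodd
    set UO : Submodule ℂ V := ⨆ i ∈ O, W i with hUO
    have hndUO : ∀ v ∈ UO, (∀ w ∈ UO, B v w = 0) → v = 0 := by
      intro v hv hvO
      apply hnd
      intro u
      have hu : u ∈ UO ⊔ (⨆ i ∈ Oᶜ, W i) := by rw [hUO, hsplitO O]; trivial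
      obtain ⟨a, ha, b, hb, rfl⟩ := Submodule.mem_sup.mp hu
      rw [map_add, hvO a ha, horthSup O Oᶜ (hcompl_ne O) v hv b hb, add_zero]
    have hstabUO : ∀ (q : ↥Q), ∀ x ∈ UO, ((q : V ≃ₗ[ℂ] V) : V →ₗ[ℂ] V) x ∈ UO := by
      intro q x hx
      have hmap : Submodule.map ((q : V ≃ₗ[ℂ] V) : V →ₗ[ℂ] V) UO ≤ UO := by
        rw [hUO, Submodule.map_iSup]
        refine iSup_le fun i => ?_
        rw [Submodule.map_iSup]
        refine iSup_le fun hi => ?_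
        rw [hπ]
        exact le_biSup W (hOinv q i hi)
      exact hmap ⟨x, hx, rfl⟩
    set B' : ↥UO →ₗ[ℂ] ↥UO →ₗ[ℂ] ℂ := B.domRestrict₁₂ UO UO with hB'
    have hB'app : ∀ v w : ↥UO, B' v w = B (↑v) (↑w) := fun v w => rfl
    have hsymm' : ∀ v w : ↥UO, B' v w = B' w v := fun v w => hsymm _ _
    have hnd' : ∀ v : ↥UO, (∀ w : ↥UO, B' v w = 0) → v = 0 := by
      intro v hv
      refine Subtype.ext (hndUO (↑v) v.2 fun w hw => ?_)
      exact hv ⟨w, hw⟩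
    set sQ : Set (Module.End ℂ ↥UO) :=
      {e | ∃ q : ↥Q, e = (((q : V ≃ₗ[ℂ] V)) : V →ₗ[ℂ] V).restrict (hstabUO q)} with hsQ
    have hres_mul : ∀ (q₁ q₂ : ↥Q),
        ((((q₁ : V ≃ₗ[ℂ] V)) : V →ₗ[ℂ] V).restrict (hstabUO q₁)) *
        ((((q₂ : V ≃ₗ[ℂ] V)) : V →ₗ[ℂ] V).restrict (hstabUO q₂)) =
        ((((q₁ * q₂ : ↥Q) : V ≃ₗ[ℂ] V)) : V →ₗ[ℂ] V).restrict (hstabUO (q₁ * q₂)) := by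
      intro q₁ q₂
      ext x
      simp only [Module.End.mul_apply, LinearMap.restrict_coe_apply]
      rfl
    have hcomm' : ∀ e ∈ sQ, ∀ e' ∈ sQ, e * e' = e' * e := by
      rintro e ⟨q₁, rfl⟩ e' ⟨q₂, rfl⟩
      rw [hres_mul, hres_mul, hQcomm q₁ q₂]
    have hord' : ∀ e ∈ sQ, ∃ m : ℕ, Odd m ∧ e ^ m = 1 := by
      rintro e ⟨q, rfl⟩
      obtain ⟨k, hk⟩ := hQp q
      refine ⟨p ^ k, hodd.pow, ?_⟩
      rw [Module.End.pow_restrict]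
      have h1 : (((q : V ≃ₗ[ℂ] V)) : V →ₗ[ℂ] V) ^ (p ^ k) = LinearMap.id := by
        have h2 : (((q ^ (p ^ k) : ↥Q) : V ≃ₗ[ℂ] V) : V →ₗ[ℂ] V) =
            (((q : V ≃ₗ[ℂ] V)) : V →ₗ[ℂ] V) ^ (p ^ k) := by
          rw [SubmonoidClass.coe_pow]
          exact map_pow (LinearEquiv.automorphismGroup.toLinearMapMonoidHom) _ _
        rw [← h2, hk]
        rfl
      ext x
      simp [LinearMap.restrict_apply, h1]
    have hiso' : ∀ e ∈ sQ, ∀ v w : ↥UO, B' (e v) (e w) = B' v w := by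
      rintro e ⟨q, rfl⟩ v w
      rw [hB'app, hB'app]
      simp only [LinearMap.restrict_coe_apply]
      exact hpres (↑q) (hQG q.2) _ _
    have hrankUO : Module.finrank ℂ ↥UO = O.toFinset.card * d := by
      have h1 : UO = ⨆ i ∈ O.toFinset, W i := by
        rw [hUO]
        congr 1
        ext i
        simp [Set.mem_toFinset]
      rw [h1, hbiSup_rank, Finset.sum_congr rfl (fun i _ => hdim_eq i), Finset.sum_const,
        smul_eq_mul]
    have hUOodd : Odd (Module.finrank ℂ ↥UO) := by
      rw [hrankUO]
      exact Nat.odd_mul.mpr ⟨hOodd, hd_odd⟩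
    obtain ⟨v', hv'0, hv'fix⟩ := exists_fixed_vector (Module.finrank ℂ ↥UO) ↥UO rfl hUOodd
      B' hsymm' hnd' sQ hcomm' hord' hiso'
    refine ⟨↑v', fun h0 => hv'0 (Subtype.ext h0), v'.2, ?_⟩
    intro q
    have h3 := hv'fix _ ⟨q, rfl⟩
    have h4 := congrArg Subtype.val h3
    rw [LinearMap.restrict_coe_apply] at h4
    exact h4
  -- orbits are invariant under π
  have hOinv : ∀ (x : Fin r) (q : ↥Q), ∀ j ∈ MulAction.orbit ↥Q x, π q j ∈ MulAction.orbit ↥Q x := by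
    intro x q j hj
    rw [← hsmul]
    obtain ⟨q', rfl⟩ := hj
    show q • q' • x ∈ _
    rw [smul_smul]
    exact MulAction.mem_orbit x (q * q')
  have horbcard : ∀ x : Fin r, Odd ((MulAction.orbit ↥Q x).toFinset.card) := by
    intro x
    rw [Set.toFinset_card]
    exact horbit_odd x
  by_cases htrans : ∀ j : Fin r, j ∈ MulAction.orbit ↥Q i0
  · -- transitive case
    obtain ⟨k, hk⟩ := hQcard
    have hcard : Nat.card ↥(MulAction.orbit ↥Q i0) = r := by
      have h1 : MulAction.orbit ↥Q i0 = Set.univ := Set.eq_univ_of_forall htrans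
      rw [h1]
      simpa using Nat.card_congr (Equiv.Set.univ (Fin r))
    have hdvd : r ∣ p ^ k := by
      rw [← hcard]
      have h2 : Nat.card ↥(MulAction.orbit ↥Q i0) ∣ Nat.card ↥Q := by
        rw [Nat.card_eq_fintype_card, Nat.card_eq_fintype_card]
        exact ⟨_, (MulAction.card_orbit_mul_card_stabilizer_eq_card_group ↥Q i0).symm⟩
      rwa [show Nat.card ↥Q = p ^ k by rw [Nat.card_eq_fintype_card, hk]] at h2
    obtain ⟨a, _, hra⟩ := (Nat.dvd_prime_pow hp).mp hdvd
    have ha1 : 1 ≤ a := by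
      rcases Nat.eq_zero_or_pos a with h0 | h1
      · rw [h0, pow_zero] at hra; omega
      · exact h1
    have hpr : p ∣ r := hra ▸ dvd_pow_self p (by omega)
    have hp1 : p ∣ 2 * p ^ f - 1 := htotal ▸ (hpr.mul_right d)
    have hp2 : p ∣ 2 * p ^ f := Dvd.dvd.mul_left (dvd_pow_self p (by omega)) 2
    have hpf0 : 1 ≤ p ^ f := Nat.one_le_pow _ _ hp.pos
    have hpf1 : 1 ≤ 2 * p ^ f := by omega
    have hp3 : p ∣ 1 := by
      have h4 := Nat.dvd_sub hp2 hp1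
      have h5 : 2 * p ^ f - (2 * p ^ f - 1) = 1 := by omega
      rwa [h5] at h4
    have h6 := Nat.le_of_dvd one_pos hp3
    have h7 := hp.two_le
    omega
  · push_neg at htrans
    obtain ⟨i1, hi1⟩ := htrans
    obtain ⟨v₁, hv₁0, hv₁mem, hv₁fix⟩ := orbfix (MulAction.orbit ↥Q i0) (hOinv i0) (horbcard i0)
    obtain ⟨v₂, hv₂0, hv₂mem, hv₂fix⟩ := orbfix (MulAction.orbit ↥Q i1) (hOinv i1) (horbcard i1)
    have hmemF : ∀ v : V, (∀ q : ↥Q, (q : V ≃ₗ[ℂ] V) v = v) →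
        v ∈ ⨅ g : Q, LinearMap.ker (((g : V ≃ₗ[ℂ] V) : V →ₗ[ℂ] V) - LinearMap.id) := by
      intro v hv
      rw [Submodule.mem_iInf]
      intro q
      rw [LinearMap.mem_ker, LinearMap.sub_apply, LinearMap.id_apply, sub_eq_zero]
      exact hv q
    have hv₁F := hmemF v₁ hv₁fix
    have hv₂F := hmemF v₂ hv₂fix
    have hspan : Submodule.span ℂ {v₁} =
        ⨅ g : Q, LinearMap.ker (((g : V ≃ₗ[ℂ] V) : V →ₗ[ℂ] V) - LinearMap.id) := by
      apply Submodule.eq_of_le_of_finrank_le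
      · rw [Submodule.span_le, Set.singleton_subset_iff]
        exact hv₁F
      · rw [hfix, finrank_span_singleton hv₁0]
    have hv₂span : v₂ ∈ Submodule.span ℂ {v₁} := by rw [hspan]; exact hv₂F
    obtain ⟨a, ha⟩ := Submodule.mem_span_singleton.mp hv₂span
    have ha0 : a ≠ 0 := by
      rintro rfl
      rw [zero_smul] at ha
      exact hv₂0 ha.symm
    have hv₁U1 : v₁ ∈ ⨆ i ∈ MulAction.orbit ↥Q i1, W i := by
      have h3 : v₁ = a⁻¹ • v₂ := by rw [← ha, smul_smul, inv_mul_cancel₀ ha0, one_smul]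
      rw [h3]
      exact Submodule.smul_mem _ _ hv₂mem
    have hne01 : ∀ i ∈ MulAction.orbit ↥Q i1, ∀ j ∈ MulAction.orbit ↥Q i0, i ≠ j := by
      intro i hi j hj
      rintro rfl
      have e1 := MulAction.orbit_eq_iff.mpr hi
      have e2 := MulAction.orbit_eq_iff.mpr hj
      apply hi1
      rw [← e2, e1]
      exact MulAction.mem_orbit_self i1
    apply hv₁0
    apply hnd
    intro u
    have hu : u ∈ (⨆ i ∈ MulAction.orbit ↥Q i0, W i) ⊔
        (⨆ i ∈ (MulAction.orbit ↥Q i0)ᶜ, W i) := by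
      rw [hsplitO]
      trivial
    obtain ⟨x, hx, y, hy, rfl⟩ := Submodule.mem_sup.mp hu
    have h1 : B v₁ x = 0 := horthSup _ _ hne01 v₁ hv₁U1 x hx
    have h2 : B v₁ y = 0 := horthSup _ _ (hcompl_ne _) v₁ hv₁mem y hy
    rw [map_add, h1, h2, add_zero]
end

section
/- Let V be a complex vector space of odd finite dimension equipped with a nondegenerate symmetric bilinear form B, and let Q be a finite abelian group of odd order acting linearly on V and preserving B. Then Q has a nonzero fixed vector: the subspace V^Q = {v ∈ V : g·v = v for all g ∈ Q} is nonzero. -/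
/-!
An isometry `f` of odd order splits `V` as the `B`-orthogonal sum of its fixed space `ker (f - 1)`
and `range (f - 1)`. On the second summand `f - f⁻¹` is skew-adjoint and injective (odd order rules
out the eigenvalue `-1`), so comparing `det (f - f⁻¹)` with `det (f⁻¹ - f)` forces even dimension.
Hence the fixed space of each group element is odd-dimensional and nondegenerate, and it is
invariant because the group is abelian; induction on the dimension finishes the proof.
-/

open Module LinearMap

section

variable {K V : Type*} [Field K] [AddCommGroup V] [Module K V]
  {B : LinearMap.BilinForm K V} {f : Module.End K V} {m : ℕ}

theorem Module.End.disjoint_ker_sub_one_range_sub_one [CharZero K] (hm : m ≠ 0)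
    (hfm : f ^ m = 1) : Disjoint (ker (f - 1)) (range (f - 1)) := by
  refine Submodule.disjoint_def.mpr ?_
  rintro _ hu ⟨x, rfl⟩
  have hfix : f ((f - 1) x) = (f - 1) x := by simpa [sub_eq_zero] using hu
  have hiter : ∀ k : ℕ, (f ^ k) x = x + k • (f - 1) x := by
    intro k
    induction k with
    | zero => simp
    | succ k ih =>
      rw [pow_succ', Module.End.mul_apply, ih, map_add, map_nsmul, hfix, succ_nsmul]
      simp only [LinearMap.sub_apply, Module.End.one_apply]
      abel
  have := hiter m
  rw [hfm, Module.End.one_apply, left_eq_add, ← Nat.cast_smul_eq_nsmul K] at this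
  exact (smul_eq_zero.mp this).resolve_left (Nat.cast_ne_zero.mpr hm)

theorem LinearMap.IsOrthogonal.apply_sub_one_eq_zero (hf : B.IsOrthogonal f) {w : V}
    (hw : w ∈ ker (f - 1)) (x : V) : B w ((f - 1) x) = 0 ∧ B ((f - 1) x) w = 0 := by
  have hfw : f w = w := by simpa [sub_eq_zero] using hw
  constructor
  · rw [LinearMap.sub_apply, Module.End.one_apply, map_sub, ← hf w x, hfw, sub_self]
  · rw [LinearMap.sub_apply, Module.End.one_apply, map_sub, LinearMap.sub_apply, ← hf x w, hfw,
      sub_self]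

theorem LinearMap.SeparatingLeft.domRestrict₁₂ {W U : Submodule K V} (hB : B.SeparatingLeft)
    (hWU : Codisjoint W U) (horth : ∀ w ∈ W, ∀ u ∈ U, B w u = 0) :
    (B.domRestrict₁₂ W W).SeparatingLeft := by
  intro x hx
  refine Subtype.ext (hB x fun v => ?_)
  obtain ⟨w, u, hw, hu, rfl⟩ := Submodule.codisjoint_iff_exists_add_eq.mp hWU v
  rw [map_add, horth x x.2 u hu, add_zero]
  exact hx ⟨w, hw⟩

variable [FiniteDimensional K V]

theorem LinearMap.det_eq_of_isAdjointPair (hB : B.SeparatingLeft) {f g : Module.End K V}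
    (h : IsAdjointPair B B f g) : LinearMap.det f = LinearMap.det g := by
  let b := Module.finBasis K V
  set J := toMatrix₂ b b B
  have hJ : J.det ≠ 0 := (separatingLeft_iff_det_ne_zero b).mp hB
  have hmat : Matrix.IsAdjointPair J J (toMatrix b b f) (toMatrix b b g) := by
    rwa [← isAdjointPair_toLinearMap₂ b b, Matrix.toLinearMap₂_toMatrix₂, Matrix.toLin_toMatrix,
      Matrix.toLin_toMatrix]
  have := congrArg Matrix.det hmat
  rw [Matrix.det_mul, Matrix.det_mul, Matrix.det_transpose, det_toMatrix, det_toMatrix,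
    mul_comm] at this
  exact mul_left_cancel₀ hJ this

variable [CharZero K]

theorem LinearMap.even_finrank_of_isSkewAdjoint (hB : B.SeparatingLeft) {s : Module.End K V}
    (h : B.IsSkewAdjoint s) (hs : ker s = ⊥) : Even (finrank K V) := by
  have hdet : LinearMap.det s ≠ 0 := fun h0 => (det_eq_zero_iff_ker_ne_bot.mp h0) hs
  have := det_eq_of_isAdjointPair hB (g := -s) h
  rw [← neg_one_smul K s, det_smul] at this
  by_contra hodd
  rw [Nat.not_even_iff_odd.mp hodd |>.neg_one_pow, neg_one_mul, eq_neg_iff_add_eq_zero,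
    ← two_mul] at this
  exact hdet ((mul_eq_zero.mp this).resolve_left two_ne_zero)

theorem Module.End.isCompl_ker_sub_one_range_sub_one (hm : m ≠ 0)
    (hfm : f ^ m = 1) : IsCompl (ker (f - 1)) (range (f - 1)) :=
  (Submodule.isCompl_iff_disjoint _ _ (by rw [add_comm, finrank_range_add_finrank_ker])).mpr
    (disjoint_ker_sub_one_range_sub_one hm hfm)

theorem LinearMap.IsOrthogonal.separatingLeft_domRestrict₁₂_ker_sub_one
    (hB : B.SeparatingLeft) (hm : m ≠ 0) (hfm : f ^ m = 1) (hf : B.IsOrthogonal f) :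
    (B.domRestrict₁₂ (ker (f - 1)) (ker (f - 1))).SeparatingLeft :=
  hB.domRestrict₁₂ (Module.End.isCompl_ker_sub_one_range_sub_one hm hfm).codisjoint
    fun _ hw _ ⟨x, hx⟩ => hx ▸ (hf.apply_sub_one_eq_zero hw x).1

theorem LinearMap.IsOrthogonal.even_finrank_of_ker_sub_one_eq_bot (hB : B.SeparatingLeft)
    (hm : Odd m) (hfm : f ^ m = 1) (hf : B.IsOrthogonal f) (hfix : ker (f - 1) = ⊥) :
    Even (finrank K V) := by
  obtain ⟨k, rfl⟩ := hm
  set g := f ^ (2 * k)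
  have hfg : f * g = 1 := by rw [← pow_succ', hfm]
  have hskew : B.IsSkewAdjoint (f - g) := by
    intro x y
    have h1 : B (f x) y = B x (g y) := by
      rw [← hf x (g y), ← Module.End.mul_apply, hfg, Module.End.one_apply]
    have h2 : B (g x) y = B x (f y) := by
      rw [← hf (g x) y, ← Module.End.mul_apply, hfg, Module.End.one_apply]
    simp [h1, h2]
  have hinj : ker (f - g) = ⊥ := by
    refine (Submodule.eq_bot_iff _).mpr fun x hx => ?_
    have hfx : f x = g x := sub_eq_zero.mp hx
    have hx2 : (f ^ 2) x = x := by
      rw [sq, Module.End.mul_apply, hfx, ← Module.End.mul_apply, hfg, Module.End.one_apply]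
    have hx1 : f x = x := by
      calc f x = ((f ^ 2) ^ (k + 1)) x := by
            rw [← pow_mul, show 2 * (k + 1) = 2 * k + 1 + 1 by ring, pow_succ, hfm, one_mul]
        _ = x := by rw [Module.End.pow_apply, Function.iterate_fixed hx2]
    rw [← Submodule.mem_bot K, ← hfix, mem_ker, LinearMap.sub_apply, hx1, Module.End.one_apply,
      sub_self]
  exact even_finrank_of_isSkewAdjoint hB hskew hinj

theorem LinearMap.IsOrthogonal.odd_finrank_ker_sub_one (hB : B.SeparatingLeft) (hm : Odd m)
    (hfm : f ^ m = 1) (hf : B.IsOrthogonal f) (hV : Odd (finrank K V)) :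
    Odd (finrank K (ker (f - 1))) := by
  set W := ker (f - 1)
  set U := range (f - 1)
  have hWU : IsCompl W U := Module.End.isCompl_ker_sub_one_range_sub_one hm.pos.ne' hfm
  have hU : ∀ x ∈ U, f x ∈ U := by
    rintro _ ⟨x, rfl⟩
    exact ⟨f x, by simp⟩
  have hBU : (B.domRestrict₁₂ U U).SeparatingLeft :=
    hB.domRestrict₁₂ hWU.symm.codisjoint fun _ ⟨x, hx⟩ _ hw =>
      hx ▸ (hf.apply_sub_one_eq_zero hw x).2
  have hfixU : ker (f.restrict hU - 1) = ⊥ := by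
    refine (Submodule.eq_bot_iff _).mpr fun x hx => Subtype.ext ?_
    refine (Submodule.disjoint_def.mp hWU.disjoint) x ?_ x.2
    simpa [W, sub_eq_zero, Subtype.ext_iff] using hx
  have hUeven : Even (finrank K U) :=
    IsOrthogonal.even_finrank_of_ker_sub_one_eq_bot hBU hm
      (by rw [Module.End.pow_restrict]; ext; simp [hfm]) (fun x y => hf x y) hfixU
  have hdim := finrank_range_add_finrank_ker (f - 1)
  exact (Nat.odd_add'.mp (hdim ▸ hV)).mpr hUeven

end

def Representation.fixedSubrepresentation {K V G : Type*} [CommRing K] [AddCommGroup V]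
    [Module K V] [CommGroup G] (ρ : Representation K G V) (g : G) : Subrepresentation ρ where
  toSubmodule := ker (ρ g - 1)
  apply_mem_toSubmodule h v hv := by
    have hgv : ρ g v = v := by simpa [sub_eq_zero] using hv
    have hcomm : ρ g (ρ h v) = ρ h (ρ g v) := by
      rw [← Module.End.mul_apply, ← map_mul, mul_comm, map_mul, Module.End.mul_apply]
    simp [hcomm, hgv]

theorem Representation.invariants_ne_bot_of_odd {K V G : Type*} [Field K] [CharZero K]
    [AddCommGroup V] [Module K V] [FiniteDimensional K V] [CommGroup G] [Fintype G]
    (hG : Odd (Fintype.card G)) (ρ : Representation K G V) {B : LinearMap.BilinForm K V}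
    (hB : B.SeparatingLeft) (hρ : ∀ g, B.IsOrthogonal (ρ g)) (hV : Odd (finrank K V)) :
    ρ.invariants ≠ ⊥ := by
  induction hn : finrank K V using Nat.strong_induction_on generalizing V with
  | _ n ih =>
    by_cases htriv : ∀ g, ρ g = 1
    · have : Nontrivial V := Module.nontrivial_of_finrank_pos hV.pos
      obtain ⟨v, hv⟩ := exists_ne (0 : V)
      exact (Submodule.ne_bot_iff _).mpr ⟨v, fun g => by simp [htriv g], hv⟩
    obtain ⟨g, hg⟩ := not_forall.mp htriv
    have hρg : ρ g ^ Fintype.card G = 1 := by rw [← map_pow, pow_card_eq_one, map_one]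
    let W := ρ.fixedSubrepresentation g
    have hlt : finrank K W.toSubmodule < n :=
      hn ▸ Submodule.finrank_lt (show ker (ρ g - 1) ≠ ⊤ by rwa [ne_eq, ker_eq_top, sub_eq_zero])
    have hW := ih _ hlt W.toRepresentation
      ((hρ g).separatingLeft_domRestrict₁₂_ker_sub_one hB hG.pos.ne' hρg)
      (fun h x y => hρ h x y) ((hρ g).odd_finrank_ker_sub_one hB hG hρg hV) rfl
    obtain ⟨w, hw, hw0⟩ := (Submodule.ne_bot_iff _).mp hW
    exact (Submodule.ne_bot_iff _).mpr
      ⟨w, fun h => congrArg Subtype.val (hw h), by simpa using hw0⟩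

theorem odd_order_fixed_vector_general
    (V : Type) [AddCommGroup V] [Module ℂ V] [FiniteDimensional ℂ V]
    (hdim : Odd (Module.finrank ℂ V))
    (B : V →ₗ[ℂ] V →ₗ[ℂ] ℂ)
    (hnd : ∀ v : V, (∀ w : V, B v w = 0) → v = 0)
    (Q : Type) [CommGroup Q] [Fintype Q] (hodd : Odd (Fintype.card Q))
    (ρ : Q →* (V ≃ₗ[ℂ] V))
    (hpres : ∀ (g : Q) (v w : V), B (ρ g v) (ρ g w) = B v w) :
    ∃ v : V, v ≠ 0 ∧ ∀ g : Q, ρ g v = v := by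
  obtain ⟨v, hv, hv0⟩ := (Submodule.ne_bot_iff _).mp <|
    Representation.invariants_ne_bot_of_odd hodd
      (LinearEquiv.automorphismGroup.toLinearMapMonoidHom.comp ρ) hnd hpres hdim
  exact ⟨v, hv0, hv⟩

/-- Let `V` be a complex vector space of odd finite dimension with a nondegenerate
symmetric bilinear form `B`, and let `Q` be a finite abelian group of odd order acting linearly
on `V` preserving `B`.  Then `Q` has a nonzero fixed vector. -/
theorem odd_order_fixed_vector
    (V : Type) [AddCommGroup V] [Module ℂ V] [FiniteDimensional ℂ V]
    (hdim : Odd (Module.finrank ℂ V))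
    (B : V →ₗ[ℂ] V →ₗ[ℂ] ℂ)
    (hsymm : ∀ v w : V, B v w = B w v)
    (hnd : ∀ v : V, (∀ w : V, B v w = 0) → v = 0)
    (Q : Type) [CommGroup Q] [Fintype Q] (hodd : Odd (Fintype.card Q))
    (ρ : Q →* (V ≃ₗ[ℂ] V))
    (hpres : ∀ (g : Q) (v w : V), B (ρ g v) (ρ g w) = B v w) :
    ∃ v : V, v ≠ 0 ∧ ∀ g : Q, ρ g v = v :=
  odd_order_fixed_vector_general V hdim B hnd Q hodd ρ hpres
end

section
/- Let n ≥ 2 and let σ be a permutation of {1,…,n}, acting linearly on the deleted permutation module, i.e. the subspace {v ∈ ℂ^n : Σᵢ vᵢ = 0} of ℂ^n with the group acting by permuting coordinates. Then σ acts with simple spectrum on this (n-1)-dimensional space (its action is diagonalizable with n-1 pairwise distinct eigenvalues) if and only if σ has at most two orbits on {1,…,n} and, in case σ has exactly two orbits, their lengths are coprime. -/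
/-!
The statement's action is `v ↦ v ∘ τ` with `τ = σ⁻¹`. For a cycle of `τ` of length `p` through
`x` and a `p`-th root of unity `ζ`, the vector with entry `ζ ^ m` at `(τ ^ m) x`, supported on
that cycle, satisfies `v (τ j) = ζ * v j`, and its coordinates sum to zero unless `ζ = 1`.
Two cycles whose lengths share a factor `d > 1` thus give two independent eigenvectors in the
deleted module for a primitive `d`-th root of unity, and three cycles give two independent
invariant vectors of coordinate sum zero; either way some eigenspace is two-dimensional, which
an eigenbasis with distinct eigenvalues forbids. Conversely, one cycle of length `n` yields the
`n - 1` eigenvalues `ζ ≠ 1` with `ζ ^ n = 1`, and two cycles of coprime lengths `p + q = n`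
yield the `p + q - 1` distinct roots of `ζ ^ p = 1` or `ζ ^ q = 1`; `n - 1` distinct eigenvalues
on the `(n - 1)`-dimensional deleted module give an eigenbasis.
-/
open Equiv

/-- The linear functional `v ↦ ∑ i, v i` on `ℂ^n`. -/
noncomputable def coordSum (n : ℕ) : (Fin n → ℂ) →ₗ[ℂ] ℂ :=
  ∑ i : Fin n, LinearMap.proj i

/-- The deleted permutation module `{v ∈ ℂ^n : ∑ i, v i = 0}`. -/
noncomputable def deletedPermModule (n : ℕ) : Submodule ℂ (Fin n → ℂ) :=
  LinearMap.ker (coordSum n)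

open Finset Module

namespace Equiv.Perm

variable {α : Type*} [Fintype α] [DecidableEq α]

def orbitFinset (τ : Perm α) (x : α) : Finset α := {y | τ.SameCycle x y}

variable {τ : Perm α} {x y : α}

@[simp]
lemma mem_orbitFinset : y ∈ τ.orbitFinset x ↔ τ.SameCycle x y := by
  simp [orbitFinset]

lemma isCycleOn_orbitFinset (τ : Perm α) (x : α) : τ.IsCycleOn (τ.orbitFinset x) := by
  refine ⟨⟨fun y hy => ?_, τ.injective.injOn, fun y hy => ⟨τ⁻¹ y, ?_, τ.apply_symm_apply y⟩⟩,
    fun y hy z hz => ?_⟩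
  · simpa [sameCycle_apply_right] using hy
  · simpa [sameCycle_symm_apply_right] using hy
  · exact (mem_orbitFinset.1 hy).symm.trans (mem_orbitFinset.1 hz)

lemma card_orbitFinset_pos (τ : Perm α) (x : α) : 0 < #(τ.orbitFinset x) :=
  card_pos.2 ⟨x, mem_orbitFinset.2 .rfl⟩

lemma orbitFinset_of_apply_eq_self (hx : τ x = x) : τ.orbitFinset x = {x} := by
  ext y
  simp only [mem_orbitFinset, mem_singleton]
  exact ⟨fun h => (h.eq_of_left hx).symm, fun h => h ▸ SameCycle.rfl⟩

lemma orbitFinset_eq_support_cycleOf (hx : x ∈ τ.support) :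
    τ.orbitFinset x = (τ.cycleOf x).support := by
  ext y
  rw [mem_orbitFinset, mem_support_cycleOf_iff]
  exact (and_iff_left hx).symm

/-- One point of each nontrivial cycle, together with the fixed points. -/
theorem exists_orbitFinset_reps (τ : Perm α) :
    ∃ R : Finset α, (R : Set α).Pairwise (fun x y => ¬τ.SameCycle x y) ∧
      R.val.map (fun x => #(τ.orbitFinset x)) = τ.partition.parts := by
  obtain ⟨a⟩ := Equiv.Perm.Basis.nonempty τ
  have hdisj : _root_.Disjoint (τ.support)ᶜ (univ.map ⟨a, a.injective⟩) := by
    refine disjoint_right.2 fun x hx => ?_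
    obtain ⟨c, -, rfl⟩ := mem_map.1 hx
    exact notMem_compl.2 (mem_cycleFactorsFinset_support_le c.2 (a.mem_support_self c))
  refine ⟨(τ.support)ᶜ.disjUnion _ hdisj, fun x hx y hy hxy hsame => hxy ?_, ?_⟩
  · simp only [coe_disjUnion, Set.mem_union, mem_coe, mem_compl, mem_support, not_not,
      coe_map, Set.mem_image, coe_univ, Set.mem_univ, true_and] at hx hy
    rcases hx with hx | ⟨c, rfl⟩
    · exact hsame.eq_of_left hx
    rcases hy with hy | ⟨d, rfl⟩
    · exact hsame.eq_of_right hy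
    have hcd : c = d := Subtype.ext <| by
      rw [← a.cycleOf_eq c, ← a.cycleOf_eq d]
      exact hsame.cycleOf_eq
    rw [hcd]
  · rw [disjUnion_val, Multiset.map_add, parts_partition, add_comm]
    congr 1
    · have horb (c : τ.cycleFactorsFinset) : #(τ.orbitFinset (a c)) = #c.val.support := by
        rw [orbitFinset_eq_support_cycleOf
          (mem_cycleFactorsFinset_support_le c.2 (a.mem_support_self c)), a.cycleOf_eq]
      simp only [map_val, Multiset.map_map, univ_eq_attach, attach_val, cycleType_def]
      rw [← Multiset.attach_map_val' _ (Finset.card ∘ support)]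
      exact Multiset.map_congr rfl fun c _ => horb c
    · refine Multiset.eq_replicate.2 ⟨by rw [Multiset.card_map, card_val, card_compl], ?_⟩
      intro k hk
      obtain ⟨x, hx, rfl⟩ := Multiset.mem_map.1 hk
      rw [orbitFinset_of_apply_eq_self (notMem_support.1 (mem_compl.1 hx)), card_singleton]
end Equiv.Perm

namespace Equiv.Perm

variable {α K : Type*} [Fintype α] [DecidableEq α] [Field K] {τ : Perm α} {x y : α} {ζ : K}

/-- Entry `ζ ^ m` at `(τ ^ m) x`, and `0` off the cycle of `x`. Since `m` is only determined
modulo the cycle length, this is the intended vector only when `ζ ^ #(τ.orbitFinset x) = 1`. -/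
noncomputable def orbitVec (τ : Perm α) (x : α) (ζ : K) : α → K := fun j =>
  if h : τ.SameCycle x j then ζ ^ h.exists_nat_pow_eq.choose else 0

lemma orbitVec_apply_of_not_sameCycle (h : ¬τ.SameCycle x y) (ζ : K) : orbitVec τ x ζ y = 0 :=
  dif_neg h

lemma orbitVec_pow_apply (hζ : ζ ^ #(τ.orbitFinset x) = 1) (m : ℕ) :
    orbitVec τ x ζ ((τ ^ m) x) = ζ ^ m := by
  have h : τ.SameCycle x ((τ ^ m) x) := sameCycle_pow_right.2 SameCycle.rfl
  rw [orbitVec, dif_pos h]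
  refine pow_eq_pow_of_modEq ?_ hζ
  exact ((isCycleOn_orbitFinset τ x).pow_apply_eq_pow_apply (mem_orbitFinset.2 .rfl)).1
    h.exists_nat_pow_eq.choose_spec

lemma orbitVec_self (hζ : ζ ^ #(τ.orbitFinset x) = 1) : orbitVec τ x ζ x = 1 := by
  simpa using orbitVec_pow_apply hζ 0

lemma orbitVec_apply_perm (hζ : ζ ^ #(τ.orbitFinset x) = 1) (j : α) :
    orbitVec τ x ζ (τ j) = ζ * orbitVec τ x ζ j := by
  by_cases h : τ.SameCycle x j
  · obtain ⟨m, rfl⟩ := h.exists_nat_pow_eq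
    rw [← mul_apply, ← pow_succ', orbitVec_pow_apply hζ, orbitVec_pow_apply hζ, pow_succ']
  · rw [orbitVec_apply_of_not_sameCycle h, orbitVec_apply_of_not_sameCycle
      (by rwa [sameCycle_apply_right]), mul_zero]

lemma orbitVec_mem_eigenspace (hζ : ζ ^ #(τ.orbitFinset x) = 1) :
    orbitVec τ x ζ ∈ End.eigenspace (LinearMap.funLeft K K τ) ζ :=
  End.mem_eigenspace_iff.2 (funext (orbitVec_apply_perm hζ))

lemma sum_orbitVec_eq_zero (hζ : ζ ^ #(τ.orbitFinset x) = 1) (hζ1 : ζ ≠ 1) :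
    ∑ j, orbitVec τ x ζ j = 0 := by
  have h : ∑ j, orbitVec τ x ζ j = ζ * ∑ j, orbitVec τ x ζ j := by
    rw [mul_sum, ← Equiv.sum_comp τ]
    exact sum_congr rfl fun j _ => orbitVec_apply_perm hζ j
  have : (1 - ζ) * ∑ j, orbitVec τ x ζ j = 0 := by linear_combination h
  exact (mul_eq_zero.1 this).resolve_left (sub_ne_zero.2 hζ1.symm)

lemma sum_orbitVec_one : ∑ j, orbitVec τ x (1 : K) j = #(τ.orbitFinset x) := by
  simp [orbitVec, orbitFinset]

end Equiv.Perm

lemma linearIndependent_pair_of_apply {α K : Type*} [Field K] {u w : α → K} {x y : α}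
    (hux : u x ≠ 0) (hwx : w x = 0) (hwy : w y ≠ 0) : LinearIndependent K ![u, w] := by
  refine LinearIndependent.pair_iff.2 fun s t hst => ?_
  have hx := congrFun hst x
  have hy := congrFun hst y
  simp only [Pi.add_apply, Pi.smul_apply, smul_eq_mul, hwx, mul_zero, add_zero,
    Pi.zero_apply] at hx hy
  obtain rfl : s = 0 := (mul_eq_zero.1 hx).resolve_right hux
  simpa [hwy] using hy

lemma Multiset.coprime_of_pair_eq {a b c d : ℕ} (h : ({a, b} : Multiset ℕ) = {c, d})
    (hcd : c.Coprime d) : a.Coprime b := by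
  have hgcd := congrArg Multiset.gcd h
  simp only [Multiset.insert_eq_cons, Multiset.gcd_cons, Multiset.gcd_singleton,
    normalize_eq] at hgcd
  exact hgcd.trans hcd

lemma Finset.exists_map_val_eq_pair_coprime_iff {α : Type*} [DecidableEq α] (R : Finset α)
    (f : α → ℕ) : (∃ a b, R.val.map f = {a, b} ∧ a.Coprime b) ↔
      ∃ x y, x ≠ y ∧ R = {x, y} ∧ (f x).Coprime (f y) := by
  constructor
  · rintro ⟨a, b, hab, hcop⟩
    obtain ⟨x, y, hxy, rfl⟩ : ∃ x y, x ≠ y ∧ R = {x, y} :=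
      card_eq_two.1 (by simpa using congrArg Multiset.card hab)
    exact ⟨x, y, hxy, rfl, Multiset.coprime_of_pair_eq (by simpa [hxy] using hab) hcop⟩
  · rintro ⟨x, y, hxy, rfl, hcop⟩
    exact ⟨f x, f y, by simp [hxy], hcop⟩

namespace Module.End

variable {K V ι : Type*} [Field K] [AddCommGroup V] [Module K V] {f : End K V} {μ : ι → K}

lemma repr_apply_of_apply_basis (b : Basis ι K V) (hb : ∀ i, f (b i) = μ i • b i) (v : V)
    (i : ι) : b.repr (f v) i = μ i * b.repr v i := by
  have : (b.coord i).comp f = μ i • b.coord i := b.ext fun j => by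
    rcases eq_or_ne i j with rfl | hij <;> simp [*]
  exact LinearMap.congr_fun this v

lemma finrank_eigenspace_le_one [Fintype ι] (b : Basis ι K V) (hμ : Function.Injective μ)
    (hb : ∀ i, f (b i) = μ i • b i) (c : K) : finrank K (f.eigenspace c) ≤ 1 := by
  classical
  have hle : f.eigenspace c ≤ Submodule.span K (({i | μ i = c} : Finset ι).image b : Set V) := by
    intro v hv
    rw [coe_image, coe_filter, b.mem_span_image]
    intro i hi
    have h := repr_apply_of_apply_basis b hb v i
    rw [mem_eigenspace_iff.1 hv, map_smul, Finsupp.smul_apply, smul_eq_mul] at h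
    exact ⟨mem_univ i, (mul_right_cancel₀ (Finsupp.mem_support_iff.1 hi) h).symm⟩
  calc finrank K (f.eigenspace c)
      ≤ finrank K (Submodule.span K (({i | μ i = c} : Finset ι).image b : Set V)) :=
        Submodule.finrank_mono hle
    _ ≤ #({i | μ i = c} : Finset ι) := (finrank_span_finset_le_card _).trans card_image_le
    _ ≤ 1 := card_le_one.2 fun i hi j hj => hμ ((mem_filter.1 hi).2.trans (mem_filter.1 hj).2.symm)

lemma exists_basis_of_card_eigenvalues [FiniteDimensional K V] {m : ℕ} (S : Finset K)
    (hS : ∀ c ∈ S, f.HasEigenvalue c) (hSm : #S = m) (hVm : finrank K V = m) :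
    ∃ (b : Basis (Fin m) K V) (μ : Fin m → K),
      Function.Injective μ ∧ ∀ i, f (b i) = μ i • b i := by
  set e := S.equivFinOfCardEq hSm
  have hμ : Function.Injective fun i => (e.symm i : K) :=
    Subtype.val_injective.comp e.symm.injective
  choose v hv using fun i => (hS _ (e.symm i).2).exists_hasEigenvector
  refine ⟨basisOfLinearIndependentOfCardEqFinrank' v
    (f.eigenvectors_linearIndependent' _ hμ v hv) (by simp [hVm]), _, hμ, fun i => ?_⟩
  simpa using (hv i).apply_eq_smul

end Module.End

section DeletedPermModule

open Module.End

variable {n : ℕ} {τ : Perm (Fin n)} {c : ℂ}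

lemma mem_deletedPermModule {v : Fin n → ℂ} : v ∈ deletedPermModule n ↔ ∑ j, v j = 0 := by
  simp [deletedPermModule, coordSum]

lemma finrank_deletedPermModule (hn : n ≠ 0) : finrank ℂ (deletedPermModule n) = n - 1 := by
  have hsurj : LinearMap.range (coordSum n) = ⊤ := LinearMap.range_eq_top.2 fun z =>
    ⟨Pi.single ⟨0, Nat.pos_of_ne_zero hn⟩ z, by simp [coordSum]⟩
  have := LinearMap.finrank_range_add_finrank_ker (coordSum n)
  rw [hsurj, finrank_top, finrank_self, finrank_fin_fun] at this
  rw [deletedPermModule]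
  omega

lemma mapsTo_funLeft_deletedPermModule (τ : Perm (Fin n)) :
    Set.MapsTo (LinearMap.funLeft ℂ ℂ τ) (deletedPermModule n) (deletedPermModule n) :=
  fun v hv => by simpa [mem_deletedPermModule, Equiv.sum_comp] using hv

/-- `v ↦ v ∘ τ`, which is the action of `τ⁻¹` in the convention `(σ • v) i = v (σ⁻¹ i)`. -/
noncomputable def deletedPermOp (τ : Perm (Fin n)) : End ℂ (deletedPermModule n) :=
  (LinearMap.funLeft ℂ ℂ τ).restrict (mapsTo_funLeft_deletedPermModule τ)

lemma deletedPermOp_eq_smul_iff {v : deletedPermModule n} :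
    deletedPermOp τ v = c • v ↔ ∀ j, (v : Fin n → ℂ) (τ j) = c * (v : Fin n → ℂ) j := by
  rw [Subtype.ext_iff, funext_iff]
  rfl

lemma hasEigenvalue_deletedPermOp {v : Fin n → ℂ} (hv : v ∈ deletedPermModule n) (hv0 : v ≠ 0)
    (hvc : v ∈ End.eigenspace (LinearMap.funLeft ℂ ℂ τ) c) : (deletedPermOp τ).HasEigenvalue c :=
  hasEigenvalue_of_hasEigenvector (x := ⟨v, hv⟩)
    ⟨mem_eigenspace_iff.2 (Subtype.ext (mem_eigenspace_iff.1 hvc)), by simpa using hv0⟩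

lemma two_le_finrank_eigenspace_deletedPermOp {u w : Fin n → ℂ} (hu : u ∈ deletedPermModule n)
    (hw : w ∈ deletedPermModule n) (huc : u ∈ End.eigenspace (LinearMap.funLeft ℂ ℂ τ) c)
    (hwc : w ∈ End.eigenspace (LinearMap.funLeft ℂ ℂ τ) c)
    (huw : LinearIndependent ℂ ![u, w]) : 2 ≤ finrank ℂ ((deletedPermOp τ).eigenspace c) := by
  have hind : LinearIndependent ℂ ![(⟨u, hu⟩ : deletedPermModule n), ⟨w, hw⟩] :=
    .of_comp (deletedPermModule n).subtype (by convert huw using 1; ext i; fin_cases i <;> rfl)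
  have hle : Submodule.span ℂ (Set.range ![(⟨u, hu⟩ : deletedPermModule n), ⟨w, hw⟩])
      ≤ (deletedPermOp τ).eigenspace c := by
    rw [Submodule.span_le, Set.range_subset_iff]
    intro i
    fin_cases i
    · exact mem_eigenspace_iff.2 (Subtype.ext (mem_eigenspace_iff.1 huc))
    · exact mem_eigenspace_iff.2 (Subtype.ext (mem_eigenspace_iff.1 hwc))
  simpa [finrank_span_eq_card hind] using Submodule.finrank_mono hle

end DeletedPermModule

section SimpleSpectrum

open Module.End Equiv.Perm

variable {n : ℕ} {τ : Perm (Fin n)} {x y : Fin n}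

lemma orbitVec_one_sub_mem_deletedPermModule (τ : Perm (Fin n)) (x y : Fin n) :
    (#(τ.orbitFinset y) : ℂ) • orbitVec τ x 1 - (#(τ.orbitFinset x) : ℂ) • orbitVec τ y 1
      ∈ deletedPermModule n := by
  rw [mem_deletedPermModule]
  simp only [Pi.sub_apply, Pi.smul_apply, smul_eq_mul, sum_sub_distrib, ← mul_sum,
    sum_orbitVec_one]
  ring

lemma orbitVec_one_sub_mem_eigenspace (τ : Perm (Fin n)) (x y : Fin n) :
    (#(τ.orbitFinset y) : ℂ) • orbitVec τ x 1 - (#(τ.orbitFinset x) : ℂ) • orbitVec τ y 1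
      ∈ End.eigenspace (LinearMap.funLeft ℂ ℂ τ) 1 :=
  sub_mem (Submodule.smul_mem _ _ (orbitVec_mem_eigenspace (one_pow _)))
    (Submodule.smul_mem _ _ (orbitVec_mem_eigenspace (one_pow _)))

lemma sameCycle_of_finrank_eigenspace_le_one
    (h : ∀ c, finrank ℂ ((deletedPermOp τ).eigenspace c) ≤ 1) (x y z : Fin n) :
    τ.SameCycle x y ∨ τ.SameCycle x z ∨ τ.SameCycle y z := by
  by_contra! hxyz
  obtain ⟨hxy, hxz, hyz⟩ := hxyz
  have hx0 : (#(τ.orbitFinset x) : ℂ) ≠ 0 := by exact_mod_cast (card_orbitFinset_pos τ x).ne'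
  have := two_le_finrank_eigenspace_deletedPermOp (orbitVec_one_sub_mem_deletedPermModule τ x y)
    (orbitVec_one_sub_mem_deletedPermModule τ x z) (orbitVec_one_sub_mem_eigenspace τ x y)
    (orbitVec_one_sub_mem_eigenspace τ x z) (linearIndependent_pair_of_apply (x := y) (y := z)
      (by simp [orbitVec_apply_of_not_sameCycle hxy, orbitVec_self, hx0])
      (by simp [orbitVec_apply_of_not_sameCycle hxy,
        orbitVec_apply_of_not_sameCycle fun h => hyz h.symm])
      (by simp [orbitVec_apply_of_not_sameCycle hxz, orbitVec_self, hx0]))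
  linarith [h 1]

lemma coprime_card_orbitFinset_of_finrank_eigenspace_le_one
    (h : ∀ c, finrank ℂ ((deletedPermOp τ).eigenspace c) ≤ 1) (hxy : ¬τ.SameCycle x y) :
    Nat.Coprime #(τ.orbitFinset x) #(τ.orbitFinset y) := by
  set d := Nat.gcd #(τ.orbitFinset x) #(τ.orbitFinset y)
  by_contra hd
  have hd0 : d ≠ 0 := (Nat.gcd_pos_of_pos_left _ (card_orbitFinset_pos τ x)).ne'
  have hζ := Complex.isPrimitiveRoot_exp d hd0
  set ζ := Complex.exp (2 * Real.pi * Complex.I / d)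
  have hζ1 : ζ ≠ 1 := hζ.ne_one (by omega)
  have hζx : ζ ^ #(τ.orbitFinset x) = 1 := (hζ.pow_eq_one_iff_dvd _).2 (Nat.gcd_dvd_left _ _)
  have hζy : ζ ^ #(τ.orbitFinset y) = 1 := (hζ.pow_eq_one_iff_dvd _).2 (Nat.gcd_dvd_right _ _)
  have := two_le_finrank_eigenspace_deletedPermOp
    (mem_deletedPermModule.2 (sum_orbitVec_eq_zero hζx hζ1))
    (mem_deletedPermModule.2 (sum_orbitVec_eq_zero hζy hζ1))
    (orbitVec_mem_eigenspace hζx) (orbitVec_mem_eigenspace hζy)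
    (linearIndependent_pair_of_apply (x := x) (y := y) (by simp [orbitVec_self hζx])
      (orbitVec_apply_of_not_sameCycle (fun h => hxy h.symm) ζ) (by simp [orbitVec_self hζy]))
  linarith [h ζ]

lemma eq_singleton_or_eq_pair_of_finrank_eigenspace_le_one
    (h : ∀ c, finrank ℂ ((deletedPermOp τ).eigenspace c) ≤ 1) {R : Finset (Fin n)}
    (hR : (R : Set (Fin n)).Pairwise fun x y => ¬τ.SameCycle x y) (hne : R.Nonempty) :
    (∃ x, R = {x}) ∨
      ∃ x y, x ≠ y ∧ R = {x, y} ∧ Nat.Coprime #(τ.orbitFinset x) #(τ.orbitFinset y) := by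
  have hle : #R ≤ 2 := by
    by_contra! h3
    obtain ⟨x, hx, y, hy, z, hz, hxy, hxz, hyz⟩ := two_lt_card.1 h3
    rcases sameCycle_of_finrank_eigenspace_le_one h x y z with h' | h' | h'
    exacts [hR hx hy hxy h', hR hx hz hxz h', hR hy hz hyz h']
  rcases (by have := hne.card_pos; omega : #R = 1 ∨ #R = 2) with h1 | h2
  · exact .inl (card_eq_one.1 h1)
  · obtain ⟨x, y, hxy, rfl⟩ := card_eq_two.1 h2
    exact .inr ⟨x, y, hxy, rfl,
      coprime_card_orbitFinset_of_finrank_eigenspace_le_one h (hR (by simp) (by simp) hxy)⟩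

lemma hasEigenvalue_deletedPermOp_of_pow_card_orbitFinset {ζ : ℂ}
    (hζ : ζ ^ #(τ.orbitFinset x) = 1) (hζ1 : ζ ≠ 1) : (deletedPermOp τ).HasEigenvalue ζ :=
  hasEigenvalue_deletedPermOp (mem_deletedPermModule.2 (sum_orbitVec_eq_zero hζ hζ1))
    (fun h => by simpa [orbitVec_self hζ] using congrFun h x) (orbitVec_mem_eigenspace hζ)

lemma hasEigenvalue_one_deletedPermOp (hxy : ¬τ.SameCycle x y) :
    (deletedPermOp τ).HasEigenvalue 1 :=
  hasEigenvalue_deletedPermOp (orbitVec_one_sub_mem_deletedPermModule τ x y)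
    (fun h => by
      simpa [orbitVec_self, orbitVec_apply_of_not_sameCycle (fun h => hxy h.symm),
        (card_orbitFinset_pos τ y).ne'] using congrFun h x)
    (orbitVec_one_sub_mem_eigenspace τ x y)

lemma exists_eigenbasis_of_card_orbitFinset_eq (hn : n ≠ 0) (hx : #(τ.orbitFinset x) = n) :
    ∃ (b : Basis (Fin (n - 1)) ℂ (deletedPermModule n)) (μ : Fin (n - 1) → ℂ),
      Function.Injective μ ∧ ∀ i, deletedPermOp τ (b i) = μ i • b i := by
  have hn' : 0 < n := Nat.pos_of_ne_zero hn
  refine exists_basis_of_card_eigenvalues ((Polynomial.nthRootsFinset n (1 : ℂ)).erase 1)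
    (fun ζ hζ => ?_) ?_ (finrank_deletedPermModule hn)
  · obtain ⟨hζ1, hζn⟩ := mem_erase.1 hζ
    exact hasEigenvalue_deletedPermOp_of_pow_card_orbitFinset (x := x)
      (by rwa [hx, ← Polynomial.mem_nthRootsFinset hn']) hζ1
  · rw [card_erase_of_mem ((Polynomial.mem_nthRootsFinset hn' 1).2 (one_pow n)),
      (Complex.isPrimitiveRoot_exp n hn).card_nthRootsFinset]

lemma exists_eigenbasis_of_coprime (hxy : ¬τ.SameCycle x y)
    (hcop : Nat.Coprime #(τ.orbitFinset x) #(τ.orbitFinset y))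
    (hn : #(τ.orbitFinset x) + #(τ.orbitFinset y) = n) :
    ∃ (b : Basis (Fin (n - 1)) ℂ (deletedPermModule n)) (μ : Fin (n - 1) → ℂ),
      Function.Injective μ ∧ ∀ i, deletedPermOp τ (b i) = μ i • b i := by
  set p := #(τ.orbitFinset x)
  set q := #(τ.orbitFinset y)
  have hp : 0 < p := card_orbitFinset_pos τ x
  have hq : 0 < q := card_orbitFinset_pos τ y
  have hinter : Polynomial.nthRootsFinset p (1 : ℂ) ∩ Polynomial.nthRootsFinset q 1 = {1} := by
    ext ζ
    simp only [mem_inter, Polynomial.mem_nthRootsFinset hp, Polynomial.mem_nthRootsFinset hq,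
      mem_singleton, ← pow_gcd_eq_one, Nat.Coprime.gcd_eq_one hcop, pow_one]
  refine exists_basis_of_card_eigenvalues
    (Polynomial.nthRootsFinset p (1 : ℂ) ∪ Polynomial.nthRootsFinset q 1) (fun ζ hζ => ?_) ?_
    (finrank_deletedPermModule (by omega))
  · obtain rfl | hζ1 := eq_or_ne ζ 1
    · exact hasEigenvalue_one_deletedPermOp hxy
    rcases mem_union.1 hζ with h | h
    · exact hasEigenvalue_deletedPermOp_of_pow_card_orbitFinset
        ((Polynomial.mem_nthRootsFinset hp 1).1 h) hζ1
    · exact hasEigenvalue_deletedPermOp_of_pow_card_orbitFinset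
        ((Polynomial.mem_nthRootsFinset hq 1).1 h) hζ1
  · have := card_union_add_card_inter (Polynomial.nthRootsFinset p (1 : ℂ))
      (Polynomial.nthRootsFinset q 1)
    rw [hinter, card_singleton, (Complex.isPrimitiveRoot_exp p hp.ne').card_nthRootsFinset,
      (Complex.isPrimitiveRoot_exp q hq.ne').card_nthRootsFinset] at this
    omega

end SimpleSpectrum

/-- Let `n ≥ 2` and let `σ` be a permutation of `{1,…,n}`, acting on the deleted
permutation module `{v ∈ ℂ^n : ∑ᵢ vᵢ = 0}` by permuting coordinates.  Then `σ` acts with simple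
spectrum on this `(n-1)`-dimensional space (diagonalizably, with `n-1` pairwise distinct
eigenvalues) if and only if `σ` has at most two orbits on `{1,…,n}`, of coprime lengths when
there are exactly two orbits. -/
theorem deleted_perm_simple_spectrum_iff
    (n : ℕ) (hn : 2 ≤ n) (σ : Equiv.Perm (Fin n)) :
    (∃ (b : Module.Basis (Fin (n - 1)) ℂ (deletedPermModule n)) (μ : Fin (n - 1) → ℂ),
        Function.Injective μ ∧
        ∀ i : Fin (n - 1), ∀ j : Fin n,
          (b i : Fin n → ℂ) (σ⁻¹ j) = μ i * (b i : Fin n → ℂ) j)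
    ↔ (Multiset.card (σ.cycleType + Multiset.replicate (n - σ.support.card) 1) = 1 ∨
       ∃ a b : ℕ, σ.cycleType + Multiset.replicate (n - σ.support.card) 1 = {a, b} ∧
         Nat.Coprime a b) := by
  obtain ⟨R, hR, hparts⟩ := Perm.exists_orbitFinset_reps σ⁻¹
  have hM : σ.cycleType + Multiset.replicate (n - #σ.support) 1 =
      R.val.map fun x => #(σ⁻¹.orbitFinset x) := by
    rw [hparts, Perm.parts_partition, Perm.cycleType_inv, Perm.support_inv, Fintype.card_fin]
  have hsum : ∑ x ∈ R, #(σ⁻¹.orbitFinset x) = n := by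
    rw [sum_eq_multiset_sum, hparts]
    simpa using σ⁻¹.partition.parts_sum
  simp_rw [← deletedPermOp_eq_smul_iff]
  rw [hM, Multiset.card_map, card_val, card_eq_one, exists_map_val_eq_pair_coprime_iff]
  constructor
  · rintro ⟨b, μ, hμ, hb⟩
    exact eq_singleton_or_eq_pair_of_finrank_eigenspace_le_one
      (Module.End.finrank_eigenspace_le_one b hμ hb) hR
      (nonempty_of_sum_ne_zero (hsum.trans_ne (by omega)))
  · rintro (⟨x, rfl⟩ | ⟨x, y, hxy, rfl, hcop⟩)
    · exact exists_eigenbasis_of_card_orbitFinset_eq (by omega) (by simpa using hsum)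
    · exact exists_eigenbasis_of_coprime (hR (by simp) (by simp) hxy) hcop
        (by simpa [hxy] using hsum)
end

section
/- Let W be a finite-dimensional complex vector space, let f ≥ 1, and let σ be a permutation of {1,…,f}. Consider the linear automorphism T_σ of the f-fold tensor power W^{⊗f} determined by T_σ(w₁ ⊗ ⋯ ⊗ w_f) = w_{σ⁻¹(1)} ⊗ ⋯ ⊗ w_{σ⁻¹(f)}. Then the trace of T_σ equals (dim W)^{c(σ)}, where c(σ) is the number of orbits (cycles, counting fixed points) of σ on {1,…,f}. -/
/-!
Tensor products of basis vectors form a basis of `W^{⊗f}` indexed by `p : Fin f → Fin (dim W)`,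
and `T_σ` permutes it by `p ↦ p ∘ σ⁻¹`. Hence the trace counts the `p` constant on the orbits
of `σ`, i.e. the functions from the set of orbits to `Fin (dim W)`.
-/

open TensorProduct PiTensorProduct

open Finset Function

theorem LinearMap.trace_eq_card_fixedPoints_of_apply_basis {R M ι : Type*} [CommRing R]
    [AddCommGroup M] [Module R M] [Fintype ι] (b : Module.Basis ι R M)
    (π : Equiv.Perm ι) (φ : M →ₗ[R] M) (hφ : ∀ i, φ (b i) = b (π i)) :
    LinearMap.trace R M φ = Nat.card {i // π i = i} := by
  classical
  rw [LinearMap.trace_eq_matrix_trace R b, Matrix.trace, Nat.card_eq_fintype_card,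
    Fintype.card_subtype]
  simp only [Matrix.diag_apply, LinearMap.toMatrix_apply, hφ, Module.Basis.repr_self,
    Finsupp.single_apply, Finset.sum_boole]

theorem PiTensorProduct.reindex_basis_piTensorProduct {ι ι' κ R M : Type*} [CommSemiring R]
    [AddCommMonoid M] [Module R M] [Finite ι] [Finite ι'] (b : Module.Basis κ R M)
    (e : ι ≃ ι') (p : ι → κ) :
    reindex R (fun _ : ι => M) e (Basis.piTensorProduct (fun _ => b) p) =
      Basis.piTensorProduct (fun _ => b) (p ∘ e.symm) := by
  simp only [Basis.piTensorProduct_apply, reindex_tprod, comp_apply]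

namespace Equiv.Perm

variable {α : Type*}

theorem SameCycle.apply_eq_of_comp_eq [Finite α] {β : Type*} {σ : Perm α} {p : α → β}
    {x y : α} (hp : p ∘ σ = p) (h : σ.SameCycle x y) : p x = p y := by
  obtain ⟨n, rfl⟩ := h.exists_nat_pow_eq
  rw [coe_pow]
  exact (congrFun (iterate_invariant hp n) x).symm

def compEqSelfEquivQuotientSameCycle [Finite α] (β : Type*) (σ : Perm α) :
    {p : α → β // p ∘ σ = p} ≃ (Quotient (SameCycle.setoid σ) → β) where
  toFun p := Quotient.lift p.1 fun _ _ => SameCycle.apply_eq_of_comp_eq p.2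
  invFun q := ⟨q ∘ Quotient.mk _, funext fun x =>
    congrArg q (Quotient.sound (s := SameCycle.setoid σ) (SameCycle.refl σ x).apply_left)⟩
  left_inv _ := rfl
  right_inv _ := funext <| Quotient.ind fun _ => rfl

variable [Fintype α] [DecidableEq α]

noncomputable def quotientSameCycleEquiv (σ : Perm α) :
    Quotient (SameCycle.setoid σ) ≃ σ.cycleFactorsFinset ⊕ {x // x ∉ σ.support} := by
  refine Equiv.ofBijective (Quotient.lift (fun x => if hx : x ∈ σ.support then
    Sum.inl ⟨σ.cycleOf x, cycleOf_mem_cycleFactorsFinset_iff.mpr hx⟩ else Sum.inr ⟨x, hx⟩)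
    fun x y hxy => ?_) ⟨?_, ?_⟩
  · by_cases hx : x ∈ σ.support
    · have hy : y ∈ σ.support := hxy.mem_support_iff.mp hx
      simp only [dif_pos hx, dif_pos hy, hxy.cycleOf_eq]
    · obtain rfl : x = y := hxy.eq_of_left (notMem_support.mp hx)
      rfl
  · refine Quotient.ind₂ fun x y hxy => Quotient.sound ?_
    by_cases hx : x ∈ σ.support <;> by_cases hy : y ∈ σ.support <;>
      simp only [hx, hy, Quotient.lift_mk, dite_true, dite_false, Sum.inl.injEq, Sum.inr.injEq,
        reduceCtorEq, Subtype.mk.injEq] at hxy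
    · have hy' : y ∈ (σ.cycleOf x).support := hxy ▸ mem_support_cycleOf_iff.mpr ⟨.rfl, hy⟩
      exact (mem_support_cycleOf_iff.mp hy').1
    · exact hxy ▸ .rfl
  · rintro (⟨c, hc⟩ | ⟨x, hx⟩)
    · obtain ⟨x, hx⟩ := (mem_cycleFactorsFinset_iff.mp hc).1.nonempty_support
      refine ⟨⟦x⟧, ?_⟩
      simp only [Quotient.lift_mk, dif_pos (mem_cycleFactorsFinset_support_le hc hx),
        cycle_is_cycleOf hx hc]
    · exact ⟨⟦x⟧, by simp only [Quotient.lift_mk, dif_neg hx]⟩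

theorem card_quotient_sameCycle (σ : Perm α) :
    Nat.card (Quotient (SameCycle.setoid σ)) =
      Multiset.card σ.cycleType + (Fintype.card α - #σ.support) := by
  rw [Nat.card_congr (quotientSameCycleEquiv σ), Nat.card_sum, Nat.card_eq_fintype_card,
    Fintype.card_coe, Nat.card_eq_fintype_card, Fintype.card_subtype_compl, Fintype.card_coe,
    cycleType_def, Multiset.card_map]
  rfl

theorem card_fun_comp_eq_self (β : Type*) (σ : Perm α) :
    Nat.card {p : α → β // p ∘ σ = p} =
      Nat.card β ^ (Multiset.card σ.cycleType + (Fintype.card α - #σ.support)) := by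
  rw [Nat.card_congr (compEqSelfEquivQuotientSameCycle β σ), Nat.card_fun,
    card_quotient_sameCycle]

end Equiv.Perm

theorem trace_of_permuting_tensor_factors_general
    (W : Type) [AddCommGroup W] [Module ℂ W] [FiniteDimensional ℂ W]
    (f : ℕ) (σ : Equiv.Perm (Fin f)) :
    LinearMap.trace ℂ (⨂[ℂ] _ : Fin f, W)
        ((PiTensorProduct.reindex ℂ (fun _ : Fin f => W) σ).toLinearMap)
      = (Module.finrank ℂ W : ℂ) ^
          (Multiset.card σ.cycleType + (f - σ.support.card)) := by
  classical
  set n := Module.finrank ℂ W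
  let b := Basis.piTensorProduct fun _ : Fin f => Module.finBasis ℂ W
  have hcard := Equiv.Perm.card_fun_comp_eq_self (Fin n) σ⁻¹
  rw [Equiv.Perm.cycleType_inv, Equiv.Perm.support_inv, Nat.card_fin, Fintype.card_fin] at hcard
  rw [LinearMap.trace_eq_card_fixedPoints_of_apply_basis b (σ.arrowCongr (.refl _)) _
    (reindex_basis_piTensorProduct _ σ)]
  exact_mod_cast hcard

/-- For `W` a finite-dimensional complex vector space, `f ≥ 1`, and `σ` a
permutation of `{1,…,f}`, the trace of the linear automorphism `T_σ` of `W^{⊗f}` permuting the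
tensor factors (`T_σ (w₁ ⊗ ⋯ ⊗ w_f) = w_{σ⁻¹(1)} ⊗ ⋯ ⊗ w_{σ⁻¹(f)}`) equals
`(dim W)^{c(σ)}`, where `c(σ)` is the number of orbits of `σ` on `{1,…,f}`. -/
theorem trace_of_permuting_tensor_factors
    (W : Type) [AddCommGroup W] [Module ℂ W] [FiniteDimensional ℂ W]
    (f : ℕ) (hf : 1 ≤ f) (σ : Equiv.Perm (Fin f)) :
    LinearMap.trace ℂ (⨂[ℂ] _ : Fin f, W)
        ((PiTensorProduct.reindex ℂ (fun _ : Fin f => W) σ).toLinearMap)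
      = (Module.finrank ℂ W : ℂ) ^
          (Multiset.card σ.cycleType + (f - σ.support.card)) :=
  trace_of_permuting_tensor_factors_general W f σ
end

section
/- Let φ be an automorphism of the alternating group Alt(6). If φ maps some 3-cycle of Alt(6) to a 3-cycle, then φ is induced by conjugation in Sym(6): there exists a permutation σ ∈ Sym(6) such that φ(g) = σ g σ⁻¹ for all g ∈ Alt(6). Equivalently, any automorphism of Alt(6) not induced by conjugation by an element of Sym(6) maps every 3-cycle to a product of two disjoint 3-cycles. -/
open Equiv

namespace Alt6Aux

open Equiv.Perm

/-- The 3-cycle `(a b c)` as a permutation of `Fin 6`. -/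
def tc (a b c : Fin 6) : Perm (Fin 6) := Equiv.swap a c * Equiv.swap a b

lemma tc_conj (g : Perm (Fin 6)) (a b c : Fin 6) :
    g * tc a b c * g⁻¹ = tc (g a) (g b) (g c) := by
  simp only [tc, swap_apply_apply]
  group

lemma tc_three (a b c : Fin 6) (hab : a ≠ b) (hbc : b ≠ c) (hac : a ≠ c) :
    (tc a b c).IsThreeCycle := by
  apply card_support_eq_three_iff.mp
  revert hab hbc hac
  revert a b c
  decide

set_option maxRecDepth 100000 in
lemma tc_rot : ∀ a b c : Fin 6, a ≠ b → b ≠ c → a ≠ c → tc a b c = tc b c a := by decide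

lemma tc_inv (a b c : Fin 6) : (tc a b c)⁻¹ = tc a c b := by
  simp [tc, mul_inv_rev]

set_option maxRecDepth 100000 in
lemma tc_apply : ∀ a b c : Fin 6, a ≠ b → b ≠ c → a ≠ c →
    tc a b c a = b ∧ tc a b c b = c ∧ tc a b c c = a ∧
    ∀ x, x ≠ a → x ≠ b → x ≠ c → tc a b c x = x := by decide

/-- Any 3-cycle of `Fin 6` has the form `tc a b c`. -/
lemma exists_tc {g : Perm (Fin 6)} (hg : g.IsThreeCycle) :
    ∃ a b c : Fin 6, a ≠ b ∧ b ≠ c ∧ a ≠ c ∧ g = tc a b c := by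
  have h3 : g.support.card = 3 := hg.card_support
  obtain ⟨a, ha⟩ : g.support.Nonempty := Finset.card_pos.mp (by omega)
  have hpow : g ^ 3 = 1 := by rw [← hg.orderOf]; exact pow_orderOf_eq_one g
  have hcube : ∀ x, g (g (g x)) = x := by
    intro x
    have : (g ^ 3) x = x := by rw [hpow]; rfl
    simpa [pow_succ, Equiv.Perm.mul_apply] using this
  have hab : a ≠ g a := fun h => (mem_support.mp ha) h.symm
  have hb : g a ∈ g.support := apply_mem_support.mpr ha
  have hbc : g a ≠ g (g a) := fun h => (mem_support.mp hb) h.symm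
  have hac : a ≠ g (g a) := by
    intro h
    have h2 := congrArg g h
    rw [hcube] at h2
    exact hab h2.symm
  refine ⟨a, g a, g (g a), hab, hbc, hac, ?_⟩
  have hc : g (g a) ∈ g.support := apply_mem_support.mpr hb
  have hsub : ({a, g a, g (g a)} : Finset (Fin 6)) ⊆ g.support := by
    intro x hx
    simp only [Finset.mem_insert, Finset.mem_singleton] at hx
    rcases hx with rfl | rfl | rfl <;> assumption
  have hcard : ({a, g a, g (g a)} : Finset (Fin 6)).card = 3 := by
    rw [Finset.card_insert_of_notMem (by simp [hab, hac]),
      Finset.card_insert_of_notMem (by simp [hbc]), Finset.card_singleton]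
  have hsupp : g.support = {a, g a, g (g a)} :=
    (Finset.eq_of_subset_of_card_le hsub (by omega)).symm
  obtain ⟨e1, e2, e3, e4⟩ := tc_apply a (g a) (g (g a)) hab hbc hac
  ext x : 1
  by_cases hx1 : x = a
  · subst hx1; rw [e1]
  by_cases hx2 : x = g a
  · subst hx2; rw [e2]
  by_cases hx3 : x = g (g a)
  · subst hx3; rw [e3, hcube]
  · rw [e4 x hx1 hx2 hx3]
    have : x ∉ g.support := by
      rw [hsupp]; simp [hx1, hx2, hx3]
    exact notMem_support.mp this

lemma three_of_isConj {g h : Perm (Fin 6)} (hc : IsConj g h) (hg : g.IsThreeCycle) :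
    h.IsThreeCycle := by
  have hg' : g.cycleType = {3} := hg
  show h.cycleType = {3}
  rw [← isConj_iff_cycleType_eq.1 hc]
  exact hg'

lemma three_conj (ρ : Perm (Fin 6)) {g : Perm (Fin 6)} (hg : g.IsThreeCycle) :
    (ρ * g * ρ⁻¹).IsThreeCycle :=
  three_of_isConj (isConj_iff.2 ⟨ρ, rfl⟩) hg

lemma three_sq_sq_ne_one {g : Perm (Fin 6)} (hg : g.IsThreeCycle) : (g * g) ^ 2 ≠ 1 := by
  intro h
  have h4 : g ^ 4 = 1 := by
    rw [show (4 : ℕ) = 2 * 2 from rfl, pow_mul, pow_two g, h]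
  have h3 : g ^ 3 = 1 := by rw [← hg.orderOf]; exact pow_orderOf_eq_one g
  have hg1 : g = 1 := by
    have h43 : g ^ 4 = g ^ 3 * g := by rw [pow_succ]
    rw [h4, h3, one_mul] at h43
    exact h43.symm
  have hcs := hg.card_support
  rw [hg1] at hcs
  simp at hcs

set_option maxRecDepth 100000 in
set_option synthInstance.maxSize 4000 in
lemma L1 : ∀ d e f : Fin 6, d ≠ e → d ≠ f → e ≠ f →
    (tc 0 1 2 * tc d e f) ^ 2 = 1 → tc 0 1 2 * tc d e f ≠ 1 →
    ∃ w : Fin 6, w ≠ 0 ∧ w ≠ 1 ∧ w ≠ 2 ∧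
      (tc d e f = tc 0 1 w ∨ tc d e f = tc 1 2 w ∨ tc d e f = tc 2 0 w) := by decide

set_option maxRecDepth 100000 in
set_option synthInstance.maxSize 4000 in
lemma Lmix : ∀ v w : Fin 6, v ≠ 0 → v ≠ 1 → v ≠ 2 → w ≠ 0 → w ≠ 1 → w ≠ 2 →
    (tc 0 1 v * tc 1 2 w) ^ 2 ≠ 1 ∧ (tc 0 1 v * tc 2 0 w) ^ 2 ≠ 1 ∧
    (tc 1 2 v * tc 0 1 w) ^ 2 ≠ 1 ∧ (tc 1 2 v * tc 2 0 w) ^ 2 ≠ 1 ∧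
    (tc 2 0 v * tc 0 1 w) ^ 2 ≠ 1 ∧ (tc 2 0 v * tc 1 2 w) ^ 2 ≠ 1 := by decide

set_option maxRecDepth 1000000 in
set_option synthInstance.maxSize 4000 in

set_option maxRecDepth 1000000 in
set_option synthInstance.maxSize 4000 in
lemma key00 : ∀ c3 c4 c5 : Fin 6,
    c3 ≠ 0 → c3 ≠ 1 → c3 ≠ 2 → c4 ≠ 0 → c4 ≠ 1 → c4 ≠ 2 → c5 ≠ 0 → c5 ≠ 1 → c5 ≠ 2 →
    c3 ≠ c4 → c3 ≠ c5 → c4 ≠ c5 →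
    ∃ σ : Perm (Fin 6), σ * tc 0 1 2 * σ⁻¹ = tc 0 1 2 ∧ σ * tc 0 1 3 * σ⁻¹ = tc 0 1 c3 ∧
      σ * tc 0 1 4 * σ⁻¹ = tc 0 1 c4 ∧ σ * tc 0 1 5 * σ⁻¹ = tc 0 1 c5 := by decide

set_option maxRecDepth 100000 in
lemma Lfix : ∀ w : Fin 6, w ≠ 0 → w ≠ 1 → w ≠ 2 →
    tc 0 1 2 w = w ∧ (tc 0 1 2)⁻¹ w = w := by decide

lemma conj01 : tc 0 1 2 * tc 0 1 2 * (tc 0 1 2)⁻¹ = tc 0 1 2 := by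
  rw [mul_inv_cancel_right]

lemma conj12 (w : Fin 6) (h0 : w ≠ 0) (h1 : w ≠ 1) (h2 : w ≠ 2) :
    tc 0 1 2 * tc 0 1 w * (tc 0 1 2)⁻¹ = tc 1 2 w := by
  rw [tc_conj, (Lfix w h0 h1 h2).1]
  congr 1

lemma conj20 (w : Fin 6) (h0 : w ≠ 0) (h1 : w ≠ 1) (h2 : w ≠ 2) :
    (tc 0 1 2)⁻¹ * tc 0 1 w * ((tc 0 1 2)⁻¹)⁻¹ = tc 2 0 w := by
  rw [tc_conj, (Lfix w h0 h1 h2).2]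
  congr 1

lemma conj20' : (tc 0 1 2)⁻¹ * tc 0 1 2 * ((tc 0 1 2)⁻¹)⁻¹ = tc 0 1 2 := by
  group

lemma dist01 {u v : Fin 6} (hu0 : u ≠ 0) (hu1 : u ≠ 1) (hv0 : v ≠ 0) (hv1 : v ≠ 1)
    (h : (tc 0 1 u * tc 0 1 v) ^ 2 = 1) : u ≠ v := by
  rintro rfl
  exact three_sq_sq_ne_one (tc_three 0 1 u (by decide) (Ne.symm hu1) (Ne.symm hu0)) h

lemma dist12 {u v : Fin 6} (hu1 : u ≠ 1) (hu2 : u ≠ 2) (hv1 : v ≠ 1) (hv2 : v ≠ 2)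
    (h : (tc 1 2 u * tc 1 2 v) ^ 2 = 1) : u ≠ v := by
  rintro rfl
  exact three_sq_sq_ne_one (tc_three 1 2 u (by decide) (Ne.symm hu2) (Ne.symm hu1)) h

lemma dist20 {u v : Fin 6} (hu2 : u ≠ 2) (hu0 : u ≠ 0) (hv2 : v ≠ 2) (hv0 : v ≠ 0)
    (h : (tc 2 0 u * tc 2 0 v) ^ 2 = 1) : u ≠ v := by
  rintro rfl
  exact three_sq_sq_ne_one (tc_three 2 0 u (by decide) (Ne.symm hu0) (Ne.symm hu2)) h

lemma keyA (w3 w4 w5 : Fin 6)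
    (h30 : w3 ≠ 0) (h31 : w3 ≠ 1) (h32 : w3 ≠ 2)
    (h40 : w4 ≠ 0) (h41 : w4 ≠ 1) (h42 : w4 ≠ 2)
    (h50 : w5 ≠ 0) (h51 : w5 ≠ 1) (h52 : w5 ≠ 2)
    (h34 : (tc 0 1 w3 * tc 0 1 w4) ^ 2 = 1) (h35 : (tc 0 1 w3 * tc 0 1 w5) ^ 2 = 1)
    (h45 : (tc 0 1 w4 * tc 0 1 w5) ^ 2 = 1) :
    ∃ σ : Perm (Fin 6), σ * tc 0 1 2 * σ⁻¹ = tc 0 1 2 ∧ σ * tc 0 1 3 * σ⁻¹ = tc 0 1 w3 ∧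
      σ * tc 0 1 4 * σ⁻¹ = tc 0 1 w4 ∧ σ * tc 0 1 5 * σ⁻¹ = tc 0 1 w5 :=
  key00 w3 w4 w5 h30 h31 h32 h40 h41 h42 h50 h51 h52
    (dist01 h30 h31 h40 h41 h34) (dist01 h30 h31 h50 h51 h35) (dist01 h40 h41 h50 h51 h45)

lemma keyB (w3 w4 w5 : Fin 6)
    (h30 : w3 ≠ 0) (h31 : w3 ≠ 1) (h32 : w3 ≠ 2)
    (h40 : w4 ≠ 0) (h41 : w4 ≠ 1) (h42 : w4 ≠ 2)
    (h50 : w5 ≠ 0) (h51 : w5 ≠ 1) (h52 : w5 ≠ 2)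
    (h34 : (tc 1 2 w3 * tc 1 2 w4) ^ 2 = 1) (h35 : (tc 1 2 w3 * tc 1 2 w5) ^ 2 = 1)
    (h45 : (tc 1 2 w4 * tc 1 2 w5) ^ 2 = 1) :
    ∃ σ : Perm (Fin 6), σ * tc 0 1 2 * σ⁻¹ = tc 0 1 2 ∧ σ * tc 0 1 3 * σ⁻¹ = tc 1 2 w3 ∧
      σ * tc 0 1 4 * σ⁻¹ = tc 1 2 w4 ∧ σ * tc 0 1 5 * σ⁻¹ = tc 1 2 w5 := by
  obtain ⟨σ, e2, e3, e4, e5⟩ :=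
    key00 w3 w4 w5 h30 h31 h32 h40 h41 h42 h50 h51 h52
      (dist12 h31 h32 h41 h42 h34) (dist12 h31 h32 h51 h52 h35) (dist12 h41 h42 h51 h52 h45)
  refine ⟨tc 0 1 2 * σ, ?_, ?_, ?_, ?_⟩
  · calc tc 0 1 2 * σ * tc 0 1 2 * (tc 0 1 2 * σ)⁻¹
        = tc 0 1 2 * (σ * tc 0 1 2 * σ⁻¹) * (tc 0 1 2)⁻¹ := by group
    _ = tc 0 1 2 := by rw [e2, conj01]
  · calc tc 0 1 2 * σ * tc 0 1 3 * (tc 0 1 2 * σ)⁻¹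
        = tc 0 1 2 * (σ * tc 0 1 3 * σ⁻¹) * (tc 0 1 2)⁻¹ := by group
    _ = tc 1 2 w3 := by rw [e3, conj12 w3 h30 h31 h32]
  · calc tc 0 1 2 * σ * tc 0 1 4 * (tc 0 1 2 * σ)⁻¹
        = tc 0 1 2 * (σ * tc 0 1 4 * σ⁻¹) * (tc 0 1 2)⁻¹ := by group
    _ = tc 1 2 w4 := by rw [e4, conj12 w4 h40 h41 h42]
  · calc tc 0 1 2 * σ * tc 0 1 5 * (tc 0 1 2 * σ)⁻¹
        = tc 0 1 2 * (σ * tc 0 1 5 * σ⁻¹) * (tc 0 1 2)⁻¹ := by group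
    _ = tc 1 2 w5 := by rw [e5, conj12 w5 h50 h51 h52]

lemma keyC (w3 w4 w5 : Fin 6)
    (h30 : w3 ≠ 0) (h31 : w3 ≠ 1) (h32 : w3 ≠ 2)
    (h40 : w4 ≠ 0) (h41 : w4 ≠ 1) (h42 : w4 ≠ 2)
    (h50 : w5 ≠ 0) (h51 : w5 ≠ 1) (h52 : w5 ≠ 2)
    (h34 : (tc 2 0 w3 * tc 2 0 w4) ^ 2 = 1) (h35 : (tc 2 0 w3 * tc 2 0 w5) ^ 2 = 1)
    (h45 : (tc 2 0 w4 * tc 2 0 w5) ^ 2 = 1) :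
    ∃ σ : Perm (Fin 6), σ * tc 0 1 2 * σ⁻¹ = tc 0 1 2 ∧ σ * tc 0 1 3 * σ⁻¹ = tc 2 0 w3 ∧
      σ * tc 0 1 4 * σ⁻¹ = tc 2 0 w4 ∧ σ * tc 0 1 5 * σ⁻¹ = tc 2 0 w5 := by
  obtain ⟨σ, e2, e3, e4, e5⟩ :=
    key00 w3 w4 w5 h30 h31 h32 h40 h41 h42 h50 h51 h52
      (dist20 h32 h30 h42 h40 h34) (dist20 h32 h30 h52 h50 h35) (dist20 h42 h40 h52 h50 h45)
  refine ⟨(tc 0 1 2)⁻¹ * σ, ?_, ?_, ?_, ?_⟩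
  · calc (tc 0 1 2)⁻¹ * σ * tc 0 1 2 * ((tc 0 1 2)⁻¹ * σ)⁻¹
        = (tc 0 1 2)⁻¹ * (σ * tc 0 1 2 * σ⁻¹) * ((tc 0 1 2)⁻¹)⁻¹ := by group
    _ = tc 0 1 2 := by rw [e2, conj20']
  · calc (tc 0 1 2)⁻¹ * σ * tc 0 1 3 * ((tc 0 1 2)⁻¹ * σ)⁻¹
        = (tc 0 1 2)⁻¹ * (σ * tc 0 1 3 * σ⁻¹) * ((tc 0 1 2)⁻¹)⁻¹ := by group
    _ = tc 2 0 w3 := by rw [e3, conj20 w3 h30 h31 h32]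
  · calc (tc 0 1 2)⁻¹ * σ * tc 0 1 4 * ((tc 0 1 2)⁻¹ * σ)⁻¹
        = (tc 0 1 2)⁻¹ * (σ * tc 0 1 4 * σ⁻¹) * ((tc 0 1 2)⁻¹)⁻¹ := by group
    _ = tc 2 0 w4 := by rw [e4, conj20 w4 h40 h41 h42]
  · calc (tc 0 1 2)⁻¹ * σ * tc 0 1 5 * ((tc 0 1 2)⁻¹ * σ)⁻¹
        = (tc 0 1 2)⁻¹ * (σ * tc 0 1 5 * σ⁻¹) * ((tc 0 1 2)⁻¹)⁻¹ := by group
    _ = tc 2 0 w5 := by rw [e5, conj20 w5 h50 h51 h52]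

lemma key0 (z3 z4 z5 : Perm (Fin 6))
    (t3 : z3.IsThreeCycle) (t4 : z4.IsThreeCycle) (t5 : z5.IsThreeCycle)
    (h23 : (tc 0 1 2 * z3) ^ 2 = 1) (h24 : (tc 0 1 2 * z4) ^ 2 = 1)
    (h25 : (tc 0 1 2 * z5) ^ 2 = 1)
    (n23 : tc 0 1 2 * z3 ≠ 1) (n24 : tc 0 1 2 * z4 ≠ 1) (n25 : tc 0 1 2 * z5 ≠ 1)
    (h34 : (z3 * z4) ^ 2 = 1) (h35 : (z3 * z5) ^ 2 = 1) (h45 : (z4 * z5) ^ 2 = 1) :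
    ∃ σ : Perm (Fin 6), σ * tc 0 1 2 * σ⁻¹ = tc 0 1 2 ∧ σ * tc 0 1 3 * σ⁻¹ = z3 ∧
      σ * tc 0 1 4 * σ⁻¹ = z4 ∧ σ * tc 0 1 5 * σ⁻¹ = z5 := by
  have fam : ∀ z : Perm (Fin 6), z.IsThreeCycle → (tc 0 1 2 * z) ^ 2 = 1 →
      tc 0 1 2 * z ≠ 1 → ∃ w : Fin 6, w ≠ 0 ∧ w ≠ 1 ∧ w ≠ 2 ∧
      (z = tc 0 1 w ∨ z = tc 1 2 w ∨ z = tc 2 0 w) := by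
    intro z tz hz nz
    obtain ⟨d, e, f, hde, hef, hdf, rfl⟩ := exists_tc tz
    exact L1 d e f hde hdf hef hz nz
  obtain ⟨w3, hw30, hw31, hw32, hc3⟩ := fam z3 t3 h23 n23
  obtain ⟨w4, hw40, hw41, hw42, hc4⟩ := fam z4 t4 h24 n24
  obtain ⟨w5, hw50, hw51, hw52, hc5⟩ := fam z5 t5 h25 n25
  clear t3 t4 t5 h23 h24 h25 n23 n24 n25
  have M34 := Lmix w3 w4 hw30 hw31 hw32 hw40 hw41 hw42
  have M35 := Lmix w3 w5 hw30 hw31 hw32 hw50 hw51 hw52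
  have M45 := Lmix w4 w5 hw40 hw41 hw42 hw50 hw51 hw52
  rcases hc3 with rfl | rfl | rfl <;> rcases hc4 with rfl | rfl | rfl <;>
    rcases hc5 with rfl | rfl | rfl
  · exact keyA w3 w4 w5 hw30 hw31 hw32 hw40 hw41 hw42 hw50 hw51 hw52 h34 h35 h45
  · exact absurd h45 M45.1
  · exact absurd h45 M45.2.1
  · exact absurd h34 M34.1
  · exact absurd h34 M34.1
  · exact absurd h34 M34.1
  · exact absurd h34 M34.2.1
  · exact absurd h34 M34.2.1
  · exact absurd h34 M34.2.1
  · exact absurd h34 M34.2.2.1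
  · exact absurd h34 M34.2.2.1
  · exact absurd h34 M34.2.2.1
  · exact absurd h35 M35.2.2.1
  · exact keyB w3 w4 w5 hw30 hw31 hw32 hw40 hw41 hw42 hw50 hw51 hw52 h34 h35 h45
  · exact absurd h35 M35.2.2.2.1
  · exact absurd h34 M34.2.2.2.1
  · exact absurd h34 M34.2.2.2.1
  · exact absurd h34 M34.2.2.2.1
  · exact absurd h34 M34.2.2.2.2.1
  · exact absurd h34 M34.2.2.2.2.1
  · exact absurd h34 M34.2.2.2.2.1
  · exact absurd h34 M34.2.2.2.2.2
  · exact absurd h34 M34.2.2.2.2.2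
  · exact absurd h34 M34.2.2.2.2.2
  · exact absurd h35 M35.2.2.2.2.1
  · exact absurd h35 M35.2.2.2.2.2
  · exact keyC w3 w4 w5 hw30 hw31 hw32 hw40 hw41 hw42 hw50 hw51 hw52 h34 h35 h45

lemma key (z2 z3 z4 z5 : Perm (Fin 6))
    (t2 : z2.IsThreeCycle) (t3 : z3.IsThreeCycle) (t4 : z4.IsThreeCycle) (t5 : z5.IsThreeCycle)
    (h23 : (z2 * z3) ^ 2 = 1) (h24 : (z2 * z4) ^ 2 = 1) (h25 : (z2 * z5) ^ 2 = 1)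
    (n23 : z2 * z3 ≠ 1) (n24 : z2 * z4 ≠ 1) (n25 : z2 * z5 ≠ 1)
    (h34 : (z3 * z4) ^ 2 = 1) (h35 : (z3 * z5) ^ 2 = 1) (h45 : (z4 * z5) ^ 2 = 1) :
    ∃ σ : Perm (Fin 6), σ * tc 0 1 2 * σ⁻¹ = z2 ∧ σ * tc 0 1 3 * σ⁻¹ = z3 ∧
      σ * tc 0 1 4 * σ⁻¹ = z4 ∧ σ * tc 0 1 5 * σ⁻¹ = z5 := by
  have tx : (tc 0 1 2 : Perm (Fin 6)).IsThreeCycle :=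
    tc_three 0 1 2 (by decide) (by decide) (by decide)
  have hconj : IsConj (tc 0 1 2 : Perm (Fin 6)) z2 := by
    apply isConj_iff_cycleType_eq.2
    have a1 : Perm.cycleType (tc 0 1 2) = {3} := tx
    have a2 : z2.cycleType = {3} := t2
    rw [a1, a2]
  obtain ⟨ρ, hρ⟩ := isConj_iff.1 hconj
  have hx2 : tc 0 1 2 = ρ⁻¹ * z2 * ρ := by rw [← hρ]; group
  have conjsq : ∀ u v : Perm (Fin 6), (u * v) ^ 2 = 1 →
      ((ρ⁻¹ * u * ρ) * (ρ⁻¹ * v * ρ)) ^ 2 = 1 := by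
    intro u v huv
    have e0 : (ρ⁻¹ * u * ρ) * (ρ⁻¹ * v * ρ) = ρ⁻¹ * (u * v) * ρ := by group
    have e : ((ρ⁻¹ * u * ρ) * (ρ⁻¹ * v * ρ)) ^ 2 = ρ⁻¹ * (u * v) ^ 2 * ρ := by
      rw [e0, pow_two, pow_two]; group
    rw [e, huv]; group
  have conjne : ∀ u v : Perm (Fin 6), u * v ≠ 1 →
      (ρ⁻¹ * u * ρ) * (ρ⁻¹ * v * ρ) ≠ 1 := by
    intro u v huv hcon
    apply huv
    have e : u * v = ρ * ((ρ⁻¹ * u * ρ) * (ρ⁻¹ * v * ρ)) * ρ⁻¹ := by group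
    rw [e, hcon]; group
  have tz : ∀ u : Perm (Fin 6), u.IsThreeCycle → (ρ⁻¹ * u * ρ).IsThreeCycle := by
    intro u hu
    simpa using three_conj ρ⁻¹ hu
  obtain ⟨σ0, e2, e3, e4, e5⟩ := key0 (ρ⁻¹ * z3 * ρ) (ρ⁻¹ * z4 * ρ) (ρ⁻¹ * z5 * ρ)
    (tz z3 t3) (tz z4 t4) (tz z5 t5)
    (hx2 ▸ conjsq z2 z3 h23) (hx2 ▸ conjsq z2 z4 h24) (hx2 ▸ conjsq z2 z5 h25)
    (hx2 ▸ conjne z2 z3 n23) (hx2 ▸ conjne z2 z4 n24) (hx2 ▸ conjne z2 z5 n25)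
    (conjsq z3 z4 h34) (conjsq z3 z5 h35) (conjsq z4 z5 h45)
  refine ⟨ρ * σ0, ?_, ?_, ?_, ?_⟩
  · calc ρ * σ0 * tc 0 1 2 * (ρ * σ0)⁻¹ = ρ * (σ0 * tc 0 1 2 * σ0⁻¹) * ρ⁻¹ := by group
    _ = z2 := by rw [e2, hρ]
  · calc ρ * σ0 * tc 0 1 3 * (ρ * σ0)⁻¹ = ρ * (σ0 * tc 0 1 3 * σ0⁻¹) * ρ⁻¹ := by group
    _ = z3 := by rw [e3]; group
  · calc ρ * σ0 * tc 0 1 4 * (ρ * σ0)⁻¹ = ρ * (σ0 * tc 0 1 4 * σ0⁻¹) * ρ⁻¹ := by group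
    _ = z4 := by rw [e4]; group
  · calc ρ * σ0 * tc 0 1 5 * (ρ * σ0)⁻¹ = ρ * (σ0 * tc 0 1 5 * σ0⁻¹) * ρ⁻¹ := by group
    _ = z5 := by rw [e5]; group

/-! ### Generation of the alternating group by the four 3-cycles -/

/-- The subgroup generated by `(0 1 2), (0 1 3), (0 1 4), (0 1 5)`. -/
def K : Subgroup (Perm (Fin 6)) :=
  Subgroup.closure {tc 0 1 2, tc 0 1 3, tc 0 1 4, tc 0 1 5}

set_option maxRecDepth 100000 in
lemma Lapp : ∀ b : Fin 6, b ≠ 0 → b ≠ 1 →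
    (tc 0 1 b 0 = 1 ∧ tc 0 1 b 1 = b ∧ tc 0 b 1 1 = 0) ∧
    ∀ c : Fin 6, c ≠ 0 → c ≠ 1 → c ≠ b → tc 0 1 b c = c ∧ tc 0 b 1 c = c := by decide

lemma htc01 (c : Fin 6) (hc0 : c ≠ 0) (hc1 : c ≠ 1) : tc 0 1 c ∈ K := by
  fin_cases c
  · exact absurd rfl hc0
  · exact absurd rfl hc1
  · exact Subgroup.subset_closure (by simp)
  · exact Subgroup.subset_closure (by simp)
  · exact Subgroup.subset_closure (by simp)
  · exact Subgroup.subset_closure (by simp)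

lemma htc10 (c : Fin 6) (hc0 : c ≠ 0) (hc1 : c ≠ 1) : tc 1 0 c ∈ K := by
  have h : tc 1 0 c = (tc 0 1 c)⁻¹ := by
    rw [tc_inv, tc_rot 0 c 1 (Ne.symm hc0) hc1 (by decide),
      tc_rot c 1 0 hc1 (by decide) hc0]
  rw [h]
  exact inv_mem (htc01 c hc0 hc1)

lemma htc1bc (b c : Fin 6) (hb0 : b ≠ 0) (hb1 : b ≠ 1) (hc0 : c ≠ 0) (hc1 : c ≠ 1)
    (hbc : b ≠ c) : tc 1 b c ∈ K := by
  have h := tc_conj (tc 0 1 b) 0 1 c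
  obtain ⟨⟨a1, a2, _⟩, a4⟩ := Lapp b hb0 hb1
  rw [a1, a2, (a4 c hc0 hc1 (Ne.symm hbc)).1] at h
  rw [← h]
  exact mul_mem (mul_mem (htc01 b hb0 hb1) (htc01 c hc0 hc1)) (inv_mem (htc01 b hb0 hb1))

lemma htc0bc (b c : Fin 6) (hb0 : b ≠ 0) (hb1 : b ≠ 1) (hc0 : c ≠ 0) (hc1 : c ≠ 1)
    (hbc : b ≠ c) : tc 0 b c ∈ K := by
  obtain ⟨w, hw0, hw1, hwb, hwc⟩ :
      ∃ w : Fin 6, w ≠ 0 ∧ w ≠ 1 ∧ w ≠ b ∧ w ≠ c := by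
    clear hb0 hb1 hc0 hc1 hbc; revert b c; decide
  have hK : tc 0 w 1 ∈ K := by
    rw [show tc 0 w 1 = (tc 0 1 w)⁻¹ from (tc_inv 0 1 w).symm]
    exact inv_mem (htc01 w hw0 hw1)
  have h := tc_conj (tc 0 w 1) 1 b c
  obtain ⟨⟨_, _, a3⟩, a4⟩ := Lapp w hw0 hw1
  rw [a3, (a4 b hb0 hb1 (Ne.symm hwb)).2, (a4 c hc0 hc1 (Ne.symm hwc)).2] at h
  rw [← h]
  exact mul_mem (mul_mem hK (htc1bc b c hb0 hb1 hc0 hc1 hbc)) (inv_mem hK)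

lemma htcabc (a b c : Fin 6) (ha0 : a ≠ 0) (ha1 : a ≠ 1) (hb0 : b ≠ 0) (hb1 : b ≠ 1)
    (hc0 : c ≠ 0) (hc1 : c ≠ 1) (hab : a ≠ b) (hbc : b ≠ c) (hac : a ≠ c) :
    tc a b c ∈ K := by
  have h := tc_conj (tc 0 1 a) 1 b c
  obtain ⟨⟨_, a2, _⟩, a4⟩ := Lapp a ha0 ha1
  rw [a2, (a4 b hb0 hb1 (Ne.symm hab)).1, (a4 c hc0 hc1 (Ne.symm hac)).1] at h
  rw [← h]
  exact mul_mem (mul_mem (htc01 a ha0 ha1) (htc1bc b c hb0 hb1 hc0 hc1 hbc))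
    (inv_mem (htc01 a ha0 ha1))

/-- With `1` in first position, all 3-cycles are in `K`. -/
lemma htc1 (b c : Fin 6) (hb1 : b ≠ 1) (hc1 : c ≠ 1) (hbc : b ≠ c) : tc 1 b c ∈ K := by
  by_cases hb0 : b = 0
  · subst hb0
    exact htc10 c (Ne.symm hbc) hc1
  · by_cases hc0 : c = 0
    · subst hc0
      rw [tc_rot 1 b 0 (Ne.symm hb1) hb0 (by decide), tc_rot b 0 1 hb0 (by decide) hb1]
      exact htc01 b hb0 hb1
    · exact htc1bc b c hb0 hb1 hc0 hc1 hbc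

/-- Every 3-cycle lies in `K`. -/
lemma gen (a b c : Fin 6) (hab : a ≠ b) (hbc : b ≠ c) (hac : a ≠ c) : tc a b c ∈ K := by
  by_cases ha1 : a = 1
  · subst ha1
    exact htc1 b c (Ne.symm hab) (Ne.symm hac) hbc
  by_cases hb1 : b = 1
  · subst hb1
    rw [tc_rot a 1 c hab hbc hac]
    exact htc1 c a (Ne.symm hbc) ha1 (Ne.symm hac)
  by_cases hc1 : c = 1
  · subst hc1
    rw [tc_rot a b 1 hab hbc hac, tc_rot b 1 a hb1 (Ne.symm ha1) (Ne.symm hab)]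
    exact htc1 a b ha1 hb1 hab
  by_cases ha0 : a = 0
  · subst ha0
    exact htc0bc b c (Ne.symm hab) hb1 (Ne.symm hac) hc1 hbc
  by_cases hb0 : b = 0
  · subst hb0
    rw [tc_rot a 0 c hab hbc hac]
    exact htc0bc c a (Ne.symm hbc) hc1 ha0 ha1 (Ne.symm hac)
  by_cases hc0 : c = 0
  · subst hc0
    rw [tc_rot a b 0 hab hbc hac, tc_rot b 0 a hb0 (Ne.symm ha0) (Ne.symm hab)]
    exact htc0bc a b ha0 ha1 hb0 hb1 hab
  exact htcabc a b c ha0 ha1 hb0 hb1 hc0 hc1 hab hbc hac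

end Alt6Aux

open Alt6Aux in
/-- If an automorphism `φ` of `Alt(6)` maps some 3-cycle to a 3-cycle, then `φ` is
induced by conjugation by an element of `Sym(6)`. -/
theorem alt6_aut_of_three_cycle
    (φ : alternatingGroup (Fin 6) ≃* alternatingGroup (Fin 6))
    (h : ∃ g : alternatingGroup (Fin 6),
      (g : Equiv.Perm (Fin 6)).IsThreeCycle ∧ ((φ g : Equiv.Perm (Fin 6))).IsThreeCycle) :
    ∃ σ : Equiv.Perm (Fin 6), ∀ g : alternatingGroup (Fin 6),
      (φ g : Equiv.Perm (Fin 6)) = σ * (g : Equiv.Perm (Fin 6)) * σ⁻¹ := by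
  classical
  have hmem : ∀ i : Fin 6, i ≠ 0 → i ≠ 1 → tc 0 1 i ∈ alternatingGroup (Fin 6) := fun i h0 h1 =>
    Equiv.Perm.mem_alternatingGroup.2 (tc_three 0 1 i (by decide) (Ne.symm h1) (Ne.symm h0)).sign
  set X2 : alternatingGroup (Fin 6) := ⟨tc 0 1 2, hmem 2 (by decide) (by decide)⟩ with hX2
  set X3 : alternatingGroup (Fin 6) := ⟨tc 0 1 3, hmem 3 (by decide) (by decide)⟩ with hX3
  set X4 : alternatingGroup (Fin 6) := ⟨tc 0 1 4, hmem 4 (by decide) (by decide)⟩ with hX4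
  set X5 : alternatingGroup (Fin 6) := ⟨tc 0 1 5, hmem 5 (by decide) (by decide)⟩ with hX5
  -- φ sends every 3-cycle of Alt(6) to a 3-cycle
  obtain ⟨g0, hg0, hφg0⟩ := h
  have hthree : ∀ g : alternatingGroup (Fin 6), ((g : Equiv.Perm (Fin 6))).IsThreeCycle →
      ((φ g : Equiv.Perm (Fin 6))).IsThreeCycle := by
    intro g hg
    have h5 : 5 ≤ Nat.card (Fin 6) := by simp
    have hconj : IsConj g0 g := alternatingGroup.isThreeCycle_isConj h5 hg0 hg
    have hconj2 : IsConj (φ g0) (φ g) := φ.toMonoidHom.map_isConj hconj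
    have hconj3 : IsConj ((φ g0 : Equiv.Perm (Fin 6))) ((φ g : Equiv.Perm (Fin 6))) := by
      simpa using ((alternatingGroup (Fin 6)).subtype).map_isConj hconj2
    exact three_of_isConj hconj3 hφg0
  -- the images of the generators are 3-cycles
  have t2 : ((φ X2 : Equiv.Perm (Fin 6))).IsThreeCycle :=
    hthree X2 (tc_three 0 1 2 (by decide) (by decide) (by decide))
  have t3 : ((φ X3 : Equiv.Perm (Fin 6))).IsThreeCycle :=
    hthree X3 (tc_three 0 1 3 (by decide) (by decide) (by decide))
  have t4 : ((φ X4 : Equiv.Perm (Fin 6))).IsThreeCycle :=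
    hthree X4 (tc_three 0 1 4 (by decide) (by decide) (by decide))
  have t5 : ((φ X5 : Equiv.Perm (Fin 6))).IsThreeCycle :=
    hthree X5 (tc_three 0 1 5 (by decide) (by decide) (by decide))
  -- the relations are preserved by φ
  have hrel : ∀ A B : alternatingGroup (Fin 6), (A * B) ^ 2 = 1 →
      ((φ A : Equiv.Perm (Fin 6)) * (φ B : Equiv.Perm (Fin 6))) ^ 2 = 1 := by
    intro A B hAB
    have h1 : (φ A * φ B) ^ 2 = 1 := by rw [← map_mul, ← map_pow, hAB, map_one]
    have h2 := congrArg (Subtype.val) h1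
    simpa using h2
  have hnone : ∀ A B : alternatingGroup (Fin 6), A * B ≠ 1 →
      (φ A : Equiv.Perm (Fin 6)) * (φ B : Equiv.Perm (Fin 6)) ≠ 1 := by
    intro A B hAB hcon
    apply hAB
    have h1 : φ A * φ B = 1 := Subtype.ext (by simpa using hcon)
    rw [← map_mul] at h1
    exact (MulEquiv.map_eq_one_iff φ).1 h1
  have hABrel : ∀ A B : alternatingGroup (Fin 6),
      ((A : Equiv.Perm (Fin 6)) * (B : Equiv.Perm (Fin 6))) ^ 2 = 1 → (A * B) ^ 2 = 1 := by
    intro A B hAB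
    apply Subtype.ext
    simpa using hAB
  have hABne : ∀ A B : alternatingGroup (Fin 6),
      (A : Equiv.Perm (Fin 6)) * (B : Equiv.Perm (Fin 6)) ≠ 1 → A * B ≠ 1 := by
    intro A B hAB hcon
    apply hAB
    have := congrArg (Subtype.val) hcon
    simpa using this
  -- the concrete relations between the generators
  have r23 : ((tc 0 1 2 : Perm (Fin 6)) * tc 0 1 3) ^ 2 = 1 := by decide
  have r24 : ((tc 0 1 2 : Perm (Fin 6)) * tc 0 1 4) ^ 2 = 1 := by decide
  have r25 : ((tc 0 1 2 : Perm (Fin 6)) * tc 0 1 5) ^ 2 = 1 := by decide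
  have r34 : ((tc 0 1 3 : Perm (Fin 6)) * tc 0 1 4) ^ 2 = 1 := by decide
  have r35 : ((tc 0 1 3 : Perm (Fin 6)) * tc 0 1 5) ^ 2 = 1 := by decide
  have r45 : ((tc 0 1 4 : Perm (Fin 6)) * tc 0 1 5) ^ 2 = 1 := by decide
  have q23 : (tc 0 1 2 : Perm (Fin 6)) * tc 0 1 3 ≠ 1 := by decide
  have q24 : (tc 0 1 2 : Perm (Fin 6)) * tc 0 1 4 ≠ 1 := by decide
  have q25 : (tc 0 1 2 : Perm (Fin 6)) * tc 0 1 5 ≠ 1 := by decide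
  -- apply the key lemma
  obtain ⟨σ, e2, e3, e4, e5⟩ :=
    key (φ X2 : Equiv.Perm (Fin 6)) (φ X3 : Equiv.Perm (Fin 6))
      (φ X4 : Equiv.Perm (Fin 6)) (φ X5 : Equiv.Perm (Fin 6)) t2 t3 t4 t5
      (hrel X2 X3 (hABrel X2 X3 r23)) (hrel X2 X4 (hABrel X2 X4 r24))
      (hrel X2 X5 (hABrel X2 X5 r25)) (hnone X2 X3 (hABne X2 X3 q23))
      (hnone X2 X4 (hABne X2 X4 q24)) (hnone X2 X5 (hABne X2 X5 q25))
      (hrel X3 X4 (hABrel X3 X4 r34)) (hrel X3 X5 (hABrel X3 X5 r35))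
      (hrel X4 X5 (hABrel X4 X5 r45))
  refine ⟨σ, ?_⟩
  -- K is contained in the alternating group
  have KleAlt : K ≤ alternatingGroup (Fin 6) := by
    apply (Subgroup.closure_le _).2
    rintro x hx
    simp only [Set.mem_insert_iff, Set.mem_singleton_iff] at hx
    rcases hx with rfl | rfl | rfl | rfl
    · exact hmem 2 (by decide) (by decide)
    · exact hmem 3 (by decide) (by decide)
    · exact hmem 4 (by decide) (by decide)
    · exact hmem 5 (by decide) (by decide)
  have altleK : alternatingGroup (Fin 6) ≤ K := by
    rw [← Equiv.Perm.closure_three_cycles_eq_alternating]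
    apply (Subgroup.closure_le _).2
    rintro t ht
    obtain ⟨a, b, c, hab, hbc, hac, rfl⟩ := exists_tc ht
    exact gen a b c hab hbc hac
  have main : ∀ (x : Equiv.Perm (Fin 6)) (hx : x ∈ K),
      (φ ⟨x, KleAlt hx⟩ : Equiv.Perm (Fin 6)) = σ * x * σ⁻¹ := by
    intro x hx
    refine Subgroup.closure_induction
      (p := fun y hy => (φ ⟨y, KleAlt hy⟩ : Equiv.Perm (Fin 6)) = σ * y * σ⁻¹)
      ?_ ?_ ?_ ?_ hx
    · rintro y hy
      simp only [Set.mem_insert_iff, Set.mem_singleton_iff] at hy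
      rcases hy with rfl | rfl | rfl | rfl
      · exact e2.symm
      · exact e3.symm
      · exact e4.symm
      · exact e5.symm
    · show (φ ⟨1, KleAlt (one_mem K)⟩ : Equiv.Perm (Fin 6)) = σ * 1 * σ⁻¹
      rw [show (⟨1, KleAlt (one_mem K)⟩ : alternatingGroup (Fin 6)) = 1 from rfl, map_one]
      simp
    · intro y z hy hz ihy ihz
      show (φ ⟨y * z, KleAlt (mul_mem hy hz)⟩ : Equiv.Perm (Fin 6)) = σ * (y * z) * σ⁻¹
      have hmul : (⟨y * z, KleAlt (mul_mem hy hz)⟩ : alternatingGroup (Fin 6)) =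
          ⟨y, KleAlt hy⟩ * ⟨z, KleAlt hz⟩ := rfl
      rw [hmul, map_mul]
      push_cast
      rw [ihy, ihz]
      group
    · intro y hy ihy
      show (φ ⟨y⁻¹, KleAlt (inv_mem hy)⟩ : Equiv.Perm (Fin 6)) = σ * y⁻¹ * σ⁻¹
      have hinv : (⟨y⁻¹, KleAlt (inv_mem hy)⟩ : alternatingGroup (Fin 6)) =
          (⟨y, KleAlt hy⟩)⁻¹ := rfl
      rw [hinv, map_inv]
      push_cast
      rw [ihy]
      group
  intro g
  have hgK : (g : Equiv.Perm (Fin 6)) ∈ K := altleK g.2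
  have := main (g : Equiv.Perm (Fin 6)) hgK
  rwa [show (⟨(g : Equiv.Perm (Fin 6)), KleAlt hgK⟩ : alternatingGroup (Fin 6)) = g from
    Subtype.ext rfl] at this
end
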